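/- arXiv:0809.0439 — 6 statements merged into one kernel-verified Lean document; each statement's English description precedes it below -/
import Mathlib

section
/- Let (Ω_j)_{j≥1} be open subsets of ℂ with Ω_j ⊆ Ω_{j+1} for all j and ⋃_j Ω_j = ℂ, and assume that for each j the complement ℂ ∖ Ω_j is either empty or connected and unbounded. For each j let Φ_j be holomorphic on Ω_j. Then there exists a function Φ holomorphic on Ω₁ such that for every n ≥ 1 there is a function g_n holomorphic on Ω_{n+1} with Φ(z) = Φ₁(z) + ⋯ + Φ_n(z) + g_n(z) for all z ∈ Ω₁; that is, Φ − Σ_{j=1}^n Φ_j extends holomorphically from Ω₁ to Ω_{n+1} for every n. -/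
/-!
Approximate each `Φⱼ` within `2⁻ʲ` by a Taylor polynomial `pⱼ` on the largest disc of integer
radius `≤ j` around `0` contained in `Ωⱼ`. Since the `Ωⱼ` exhaust `ℂ`, every disc lies in these
approximation discs from some index on, so for each `m` the series `∑_{j ≥ m} (Φⱼ - pⱼ)` converges
locally uniformly on `Ωₘ` and is holomorphic there. Then `Φ := ∑ⱼ (Φⱼ - pⱼ)` works, with
`gₙ := ∑_{j > n} (Φⱼ - pⱼ) - ∑_{j ≤ n} pⱼ`.
-/

open Metric Filter Finset Topology

theorem Complex.exists_differentiable_dist_le_on_closedBall {f : ℂ → ℂ} {U : Set ℂ}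
    (hU : IsOpen U) (hf : DifferentiableOn ℂ f U) {x : ℂ} {r : ℝ} (hr : closedBall x r ⊆ U)
    {ε : ℝ} (hε : 0 < ε) :
    ∃ p : ℂ → ℂ, Differentiable ℂ p ∧ ∀ z ∈ closedBall x r, dist (f z) (p z) ≤ ε := by
  rcases lt_or_ge r 0 with hr0 | hr0
  · exact ⟨0, differentiable_const 0, fun z hz => absurd hz (by simp [closedBall_eq_empty.2 hr0])⟩
  obtain ⟨R, hrR, hR⟩ : ∃ R : NNReal, r < R ∧ closedBall x R ⊆ U := by
    obtain ⟨δ, hδ, hδU⟩ := (isCompact_closedBall x r).exists_cthickening_subset_open hU hr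
    refine ⟨(r + δ).toNNReal, ?_, ?_⟩ <;> rw [Real.coe_toNNReal _ (by positivity)]
    · linarith
    · rwa [add_comm, ← cthickening_closedBall hδ.le hr0]
  have hseries := (hf.mono hR).hasFPowerSeriesOnBall (mod_cast hr0.trans_lt hrR)
  have hunif := (tendstoLocallyUniformlyOn_iff_forall_isCompact isOpen_eball).1
    hseries.tendstoLocallyUniformlyOn' (closedBall x r)
    (fun z hz => edist_lt_coe.2 ((mem_closedBall.1 hz).trans_lt hrR)) (isCompact_closedBall x r)
  obtain ⟨n, hn⟩ := (Metric.tendstoUniformlyOn_iff.1 hunif ε hε).exists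
  refine ⟨fun z => (cauchyPowerSeries f x R).partialSum n (z - x), ?_, fun z hz => (hn z hz).le⟩
  simp only [FormalMultilinearSeries.partialSum, FormalMultilinearSeries.apply_eq_pow_smul_coeff]
  fun_prop

theorem Complex.exists_differentiable_dist_le_on_closedBalls {f : ℂ → ℂ} {U : Set ℂ}
    (hU : IsOpen U) (hf : DifferentiableOn ℂ f U) (x : ℂ) (N : ℕ) {ε : ℝ} (hε : 0 < ε) :
    ∃ p : ℂ → ℂ, Differentiable ℂ p ∧
      ∀ k ≤ N, closedBall x k ⊆ U → ∀ z ∈ closedBall x k, dist (f z) (p z) ≤ ε := by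
  classical
  by_cases h : ∃ k ≤ N, closedBall x k ⊆ U
  · obtain ⟨k, hkN, hk⟩ := h
    have hmax : closedBall x (Nat.findGreatest (fun k => closedBall x k ⊆ U) N) ⊆ U :=
      Nat.findGreatest_spec (P := fun k : ℕ => closedBall x k ⊆ U) hkN hk
    obtain ⟨p, hp, hpf⟩ := exists_differentiable_dist_le_on_closedBall hU hf hmax hε
    exact ⟨p, hp, fun k hkN hk z hz =>
      hpf z (closedBall_subset_closedBall (mod_cast Nat.le_findGreatest hkN hk) hz)⟩
  · push Not at h
    exact ⟨0, differentiable_const 0, fun k hkN hk => absurd hk (h k hkN)⟩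

theorem IsCompact.eventually_subset_of_monotone {X ι : Type*} [TopologicalSpace X] [Preorder ι]
    [IsDirected ι (· ≤ ·)] [Nonempty ι] {Ω : ι → Set X} (hopen : ∀ i, IsOpen (Ω i))
    (hΩ : Monotone Ω) {K : Set X} (hK : IsCompact K) (hKΩ : K ⊆ ⋃ i, Ω i) :
    ∀ᶠ i in atTop, K ⊆ Ω i := by
  obtain ⟨i, hi⟩ := hK.elim_directed_cover Ω hopen hKΩ hΩ.directed_le
  exact eventually_atTop.2 ⟨i, fun j hij => hi.trans (hΩ hij)⟩

theorem Complex.differentiableOn_tsum_of_eventually_norm_le {U : Set ℂ} (hU : IsOpen U)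
    {F : ℕ → ℂ → ℂ} {u : ℕ → ℝ} (hu : Summable u) (hF : ∀ j, DifferentiableOn ℂ (F j) U)
    (hFu : ∀ z ∈ U, ∃ V ∈ 𝓝[U] z, ∀ᶠ j in atTop, ∀ w ∈ V, ‖F j w‖ ≤ u j) :
    DifferentiableOn ℂ (fun w => ∑' j, F j w) U := by
  have hloc : TendstoLocallyUniformlyOn (fun N w => ∑ j ∈ range N, F j w)
      (fun w => ∑' j, F j w) atTop U :=
    tendstoLocallyUniformlyOn_of_forall_exists_nhds fun z hz => by
      obtain ⟨V, hV, hFV⟩ := hFu z hz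
      exact ⟨V, hV, tendstoUniformlyOn_tsum_nat_eventually hu hFV⟩
  exact hloc.differentiableOn
    (Eventually.of_forall fun N => DifferentiableOn.fun_sum fun j _ => hF j) hU

theorem Complex.exists_differentiable_approx_of_exhaustion {Ω : ℕ → Set ℂ}
    (hopen : ∀ j, IsOpen (Ω j)) (hΩ : Monotone Ω) (hunion : ⋃ j, Ω j = Set.univ)
    {Φ : ℕ → ℂ → ℂ} (hΦ : ∀ j, DifferentiableOn ℂ (Φ j) (Ω j)) :
    ∃ p : ℕ → ℂ → ℂ, (∀ j, Differentiable ℂ (p j)) ∧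
      ∀ R : ℝ, ∀ᶠ j in atTop, ∀ z ∈ closedBall (0 : ℂ) R, ‖Φ j z - p j z‖ ≤ (1 / 2) ^ j := by
  choose p hp hpΦ using fun j =>
    exists_differentiable_dist_le_on_closedBalls (hopen j) (hΦ j) 0 j (ε := (1 / 2) ^ j)
      (by positivity)
  refine ⟨p, hp, fun R => ?_⟩
  filter_upwards [(isCompact_closedBall (0 : ℂ) ⌈R⌉₊).eventually_subset_of_monotone hopen hΩ
      (hunion ▸ Set.subset_univ _), eventually_ge_atTop ⌈R⌉₊] with j hRj hj z hz
  rw [← dist_eq_norm]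
  exact hpΦ j _ hj hRj z (closedBall_subset_closedBall (Nat.le_ceil R) hz)

theorem Complex.differentiableOn_tsum_sub_of_exhaustion {Ω : ℕ → Set ℂ}
    (hopen : ∀ j, IsOpen (Ω j)) (hΩ : Monotone Ω) {Φ p : ℕ → ℂ → ℂ}
    (hΦ : ∀ j, DifferentiableOn ℂ (Φ j) (Ω j)) (hp : ∀ j, Differentiable ℂ (p j))
    (hpΦ : ∀ R : ℝ, ∀ᶠ j in atTop, ∀ z ∈ closedBall (0 : ℂ) R, ‖Φ j z - p j z‖ ≤ (1 / 2) ^ j)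
    (m : ℕ) :
    DifferentiableOn ℂ (fun z => ∑' j, (Φ (j + m) z - p (j + m) z)) (Ω m) := by
  refine differentiableOn_tsum_of_eventually_norm_le (u := fun j => (1 / 2 : ℝ) ^ (j + m))
    (hopen m) ((summable_nat_add_iff m).2 summable_geometric_two)
    (fun j => ((hΦ (j + m)).mono (hΩ (Nat.le_add_left m j))).sub (hp (j + m)).differentiableOn)
    fun z _ => ⟨closedBall 0 (‖z‖ + 1), mem_nhdsWithin_of_mem_nhds ?_,
      (tendsto_add_atTop_nat m).eventually (hpΦ (‖z‖ + 1))⟩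
  exact closedBall_mem_nhds_of_mem (mem_ball_zero_iff.2 (lt_add_one _))

theorem stmt_8_general (Ω : ℕ → Set ℂ) (hopen : ∀ j, IsOpen (Ω j))
    (hmono : ∀ j, Ω j ⊆ Ω (j + 1)) (hunion : ⋃ j, Ω j = Set.univ)
    (Φs : ℕ → ℂ → ℂ) (hΦs : ∀ j, DifferentiableOn ℂ (Φs j) (Ω j)) :
    ∃ Φ : ℂ → ℂ, DifferentiableOn ℂ Φ (Ω 0) ∧
      ∀ n : ℕ, ∃ g : ℂ → ℂ, DifferentiableOn ℂ g (Ω (n + 1)) ∧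
        ∀ z ∈ Ω 0, Φ z = (∑ j ∈ Finset.range (n + 1), Φs j z) + g z := by
  have hΩ : Monotone Ω := monotone_nat_of_le_succ hmono
  obtain ⟨p, hp, hpΦ⟩ := Complex.exists_differentiable_approx_of_exhaustion hopen hΩ hunion hΦs
  have htail := Complex.differentiableOn_tsum_sub_of_exhaustion hopen hΩ hΦs hp hpΦ
  have hsum (z : ℂ) : Summable fun j => Φs j z - p j z :=
    summable_geometric_two.of_norm_bounded_eventually_nat <|
      (hpΦ ‖z‖).mono fun j hj => hj z (mem_closedBall_zero_iff.2 le_rfl)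
  refine ⟨fun z => ∑' j, (Φs j z - p j z), by simpa using htail 0, fun n => ?_⟩
  refine ⟨fun z => ∑' j, (Φs (j + (n + 1)) z - p (j + (n + 1)) z) - ∑ j ∈ range (n + 1), p j z,
    (htail (n + 1)).sub (Differentiable.fun_sum fun j _ => hp j).differentiableOn,
    fun z _ => ?_⟩
  dsimp only
  rw [← (hsum z).sum_add_tsum_nat_add (n + 1), Finset.sum_sub_distrib]
  ring

/-- Mittag-Leffler sum (CNP Pré I.4.1): given holomorphic functions Φⱼ on an
increasing exhaustion of ℂ by open sets with connected unbounded complements,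
there is a function Φ holomorphic on the first set such that the tails
Φ − Σ_{j≤n} Φⱼ extend holomorphically to later sets of the exhaustion. -/
theorem stmt_8 (Ω : ℕ → Set ℂ) (hopen : ∀ j, IsOpen (Ω j))
    (hmono : ∀ j, Ω j ⊆ Ω (j + 1)) (hunion : ⋃ j, Ω j = Set.univ)
    (hcompl : ∀ j, (Ω j)ᶜ = ∅ ∨ (IsConnected (Ω j)ᶜ ∧ ¬ Bornology.IsBounded (Ω j)ᶜ))
    (Φs : ℕ → ℂ → ℂ) (hΦs : ∀ j, DifferentiableOn ℂ (Φs j) (Ω j)) :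
    ∃ Φ : ℂ → ℂ, DifferentiableOn ℂ Φ (Ω 0) ∧
      ∀ n : ℕ, ∃ g : ℂ → ℂ, DifferentiableOn ℂ g (Ω (n + 1)) ∧
        ∀ z ∈ Ω 0, Φ z = (∑ j ∈ Finset.range (n + 1), Φs j z) + g z :=
  stmt_8_general Ω hopen hmono hunion Φs hΦs
end

section
/- Let Φ : ℂ → ℂ be entire with |Φ(ξ)| ≤ C e^{K|ξ|} for all ξ ∈ ℂ, where C, K ≥ 0. Let ξ₀ ∈ ℂ, let θ₁ < θ₂ with θ₂ − θ₁ < π, and let x ∈ ℂ satisfy Re(x e^{iθ}) > K for every θ ∈ [θ₁, θ₂]. Then the two ray integrals ∫_0^∞ e^{−x(ξ₀ + t e^{iθ_k})} Φ(ξ₀ + t e^{iθ_k}) e^{iθ_k} dt (k = 1, 2) converge absolutely and are equal. Consequently the Laplace integral of an entire function of exponential type along the boundary contour of a sector vanishes. -/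
open MeasureTheory Set Filter Complex Topology
open scoped Interval

/-!
Substituting `ξ = ξ₀ + e^w` maps the sector between the two rays onto the horizontal strip
`θ₁ ≤ Im w ≤ θ₂` and turns each ray integral of `F ξ = e^{-xξ} Φ ξ` into the integral of the
entire function `F (ξ₀ + e^w) e^w` over a horizontal line. By compactness of `[θ₁, θ₂]`,
`Re (x e^{iθ}) ≥ K + c` there for some `c > 0`, so `F` decays like `e^{-ct}` along every ray of
the sector; on the strip this becomes the bound `e^σ e^{-c e^σ}` at `Re w = σ`, which vanishes
as `σ → ±∞`. Cauchy's theorem on rectangles then shows that the two line integrals agree.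
-/

section ExpSubstitution

variable {E : Type*} [NormedAddCommGroup E] [NormedSpace ℝ E]

theorem integrableOn_Ioi_zero_iff_integrable_exp_smul_comp_exp {g : ℝ → E} :
    IntegrableOn g (Ioi 0) ↔ Integrable fun s => Real.exp s • g (Real.exp s) := by
  rw [← Real.range_exp, ← image_univ, integrableOn_image_iff_integrableOn_abs_deriv_smul
    MeasurableSet.univ (fun s _ => (Real.hasDerivAt_exp s).hasDerivWithinAt)
    Real.exp_injective.injOn,
    integrableOn_univ]
  simp only [Real.abs_exp]

theorem integral_Ioi_zero_eq_integral_exp_smul_comp_exp (g : ℝ → E) :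
    ∫ t in Ioi 0, g t = ∫ s, Real.exp s • g (Real.exp s) := by
  rw [← Real.range_exp, ← image_univ, integral_image_eq_integral_abs_deriv_smul
    MeasurableSet.univ (fun s _ => (Real.hasDerivAt_exp s).hasDerivWithinAt)
    Real.exp_injective.injOn,
    setIntegral_univ]
  simp only [Real.abs_exp]

end ExpSubstitution

section HorizontalShift

variable {E : Type*} [NormedAddCommGroup E] [NormedSpace ℂ E]

theorem integral_add_mul_I_eq_of_tendsto_verticalIntegral {f : ℂ → E} {y₁ y₂ : ℝ}
    (hf : DifferentiableOn ℂ f (univ ×ℂ [[y₁, y₂]]))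
    (h₁ : Integrable fun s : ℝ => f (s + y₁ * I)) (h₂ : Integrable fun s : ℝ => f (s + y₂ * I))
    (hvert : Tendsto (fun σ : ℝ => ∫ y in y₁..y₂, f (σ + y * I)) (atBot ⊔ atTop) (𝓝 0)) :
    ∫ s : ℝ, f (s + y₁ * I) = ∫ s : ℝ, f (s + y₂ * I) := by
  obtain ⟨hbot, htop⟩ := tendsto_sup.1 hvert
  have hrect : ∀ S : ℝ, (∫ s in -S..S, f (s + y₁ * I)) - (∫ s in -S..S, f (s + y₂ * I)) +
      I • (∫ y in y₁..y₂, f (S + y * I)) - I • (∫ y in y₁..y₂, f ((-S : ℝ) + y * I)) = 0 :=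
    fun S => by
      simpa using integral_boundary_rect_eq_zero_of_differentiableOn f (-S + y₁ * I) (S + y₂ * I)
        (hf.mono fun z hz => ⟨trivial, by simpa using hz.2⟩)
  have hlim := (((intervalIntegral_tendsto_integral h₁ tendsto_neg_atTop_atBot tendsto_id).sub
    (intervalIntegral_tendsto_integral h₂ tendsto_neg_atTop_atBot tendsto_id)).add
    (htop.const_smul I)).sub ((hbot.comp tendsto_neg_atTop_atBot).const_smul I)
  simp only [Function.comp_def, id, hrect, smul_zero, add_zero, sub_zero] at hlim
  exact sub_eq_zero.1 (tendsto_nhds_unique tendsto_const_nhds hlim).symm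

end HorizontalShift

noncomputable section Sector

-- `F ξ dξ` along the ray `ξ = ξ₀ + t e^{iθ}`, `t ≥ 0`.
def rayIntegrand (F : ℂ → ℂ) (ξ₀ : ℂ) (θ t : ℝ) : ℂ :=
  F (ξ₀ + t * cexp (θ * I)) * cexp (θ * I)

-- `F ξ dξ` pulled back along `ξ = ξ₀ + e^w`; the ray at angle `θ` becomes the line `Im w = θ`.
def expPullback (F : ℂ → ℂ) (ξ₀ w : ℂ) : ℂ :=
  F (ξ₀ + cexp w) * cexp w

variable {F : ℂ → ℂ} {ξ₀ : ℂ}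

lemma expPullback_add_mul_I (s θ : ℝ) :
    expPullback F ξ₀ (s + θ * I) = Real.exp s • rayIntegrand F ξ₀ θ (Real.exp s) := by
  rw [expPullback, rayIntegrand, Complex.exp_add, ← Complex.ofReal_exp, Complex.real_smul]
  ring

lemma integral_rayIntegrand_eq_integral_expPullback (θ : ℝ) :
    ∫ t in Ioi 0, rayIntegrand F ξ₀ θ t = ∫ s : ℝ, expPullback F ξ₀ (s + θ * I) := by
  simp only [integral_Ioi_zero_eq_integral_exp_smul_comp_exp, expPullback_add_mul_I]

lemma integrableOn_rayIntegrand_iff (θ : ℝ) :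
    IntegrableOn (rayIntegrand F ξ₀ θ) (Ioi 0) ↔
      Integrable fun s : ℝ => expPullback F ξ₀ (s + θ * I) := by
  simp only [integrableOn_Ioi_zero_iff_integrable_exp_smul_comp_exp, expPullback_add_mul_I]

variable {M c θ : ℝ}

lemma integrableOn_rayIntegrand (hF : Continuous F) (hc : 0 < c)
    (hdecay : ∀ t : ℝ, 0 ≤ t → ‖F (ξ₀ + t * cexp (θ * I))‖ ≤ M * Real.exp (-c * t)) :
    IntegrableOn (rayIntegrand F ξ₀ θ) (Ioi 0) := by
  refine ((exp_neg_integrableOn_Ioi 0 hc).const_mul M).mono'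
    (by unfold rayIntegrand; fun_prop) ?_
  filter_upwards [ae_restrict_mem measurableSet_Ioi] with t ht
  rw [rayIntegrand, norm_mul, norm_exp_ofReal_mul_I, mul_one]
  exact hdecay t (le_of_lt (mem_Ioi.1 ht))

lemma norm_expPullback_le
    (hdecay : ∀ t : ℝ, 0 ≤ t → ‖F (ξ₀ + t * cexp (θ * I))‖ ≤ M * Real.exp (-c * t)) (σ : ℝ) :
    ‖expPullback F ξ₀ (σ + θ * I)‖ ≤ M * (Real.exp σ * Real.exp (-c * Real.exp σ)) := by
  rw [expPullback_add_mul_I, norm_smul, rayIntegrand, norm_mul, norm_exp_ofReal_mul_I, mul_one,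
    Real.norm_of_nonneg (Real.exp_pos σ).le, mul_left_comm]
  exact mul_le_mul_of_nonneg_left (hdecay _ (Real.exp_pos σ).le) (Real.exp_pos σ).le

lemma tendsto_exp_mul_exp_neg_mul_exp (hc : 0 < c) :
    Tendsto (fun σ => Real.exp σ * Real.exp (-c * Real.exp σ)) (atBot ⊔ atTop) (𝓝 0) := by
  refine tendsto_sup.2 ⟨?_, ?_⟩
  · have hcont : Continuous fun u : ℝ => u * Real.exp (-c * u) := by fun_prop
    simpa [Function.comp_def] using (hcont.tendsto 0).comp Real.tendsto_exp_atBot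
  · simpa [Function.comp_def] using
      (tendsto_rpow_mul_exp_neg_mul_atTop_nhds_zero 1 c hc).comp Real.tendsto_exp_atTop

variable {θ₁ θ₂ : ℝ}

lemma tendsto_intervalIntegral_expPullback (hc : 0 < c)
    (hdecay : ∀ θ ∈ [[θ₁, θ₂]], ∀ t : ℝ, 0 ≤ t →
      ‖F (ξ₀ + t * cexp (θ * I))‖ ≤ M * Real.exp (-c * t)) :
    Tendsto (fun σ : ℝ => ∫ y in θ₁..θ₂, expPullback F ξ₀ (σ + y * I)) (atBot ⊔ atTop) (𝓝 0) := by
  have hbound := ((tendsto_exp_mul_exp_neg_mul_exp hc).const_mul M).mul_const |θ₂ - θ₁|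
  rw [mul_zero, zero_mul] at hbound
  exact squeeze_zero_norm (fun σ => intervalIntegral.norm_integral_le_of_norm_le_const
    fun y hy => norm_expPullback_le (hdecay y (uIoc_subset_uIcc hy)) σ) hbound

theorem integral_rayIntegrand_eq_of_decay (hF : Differentiable ℂ F) (hc : 0 < c)
    (hdecay : ∀ θ ∈ [[θ₁, θ₂]], ∀ t : ℝ, 0 ≤ t →
      ‖F (ξ₀ + t * cexp (θ * I))‖ ≤ M * Real.exp (-c * t)) :
    ∫ t in Ioi 0, rayIntegrand F ξ₀ θ₁ t = ∫ t in Ioi 0, rayIntegrand F ξ₀ θ₂ t := by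
  have hline : ∀ θ ∈ [[θ₁, θ₂]], Integrable fun s : ℝ => expPullback F ξ₀ (s + θ * I) :=
    fun θ hθ => (integrableOn_rayIntegrand_iff θ).1
      (integrableOn_rayIntegrand hF.continuous hc (hdecay θ hθ))
  have hH : Differentiable ℂ (expPullback F ξ₀) := by unfold expPullback; fun_prop
  simp only [integral_rayIntegrand_eq_integral_expPullback]
  exact integral_add_mul_I_eq_of_tendsto_verticalIntegral hH.differentiableOn
    (hline θ₁ left_mem_uIcc) (hline θ₂ right_mem_uIcc)
    (tendsto_intervalIntegral_expPullback hc hdecay)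

end Sector

lemma norm_cexp_neg_mul_mul_le {Φ : ℂ → ℂ} {C K c t θ : ℝ} {x ξ₀ : ℂ} (hC : 0 ≤ C) (hK : 0 ≤ K)
    (hbd : ∀ ξ : ℂ, ‖Φ ξ‖ ≤ C * Real.exp (K * ‖ξ‖)) (hθ : K + c ≤ (x * cexp (θ * I)).re)
    (ht : 0 ≤ t) :
    ‖cexp (-x * (ξ₀ + t * cexp (θ * I))) * Φ (ξ₀ + t * cexp (θ * I))‖ ≤
      C * Real.exp (K * ‖ξ₀‖ - (x * ξ₀).re) * Real.exp (-c * t) := by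
  set r := (x * cexp (θ * I)).re
  have hre : (-x * (ξ₀ + t * cexp (θ * I))).re = -(x * ξ₀).re - t * r := by
    rw [show -x * (ξ₀ + t * cexp (θ * I)) = -(x * ξ₀) - t * (x * cexp (θ * I)) by ring,
      sub_re, neg_re, re_ofReal_mul]
  have hnorm : ‖ξ₀ + t * cexp (θ * I)‖ ≤ ‖ξ₀‖ + t := (norm_add_le _ _).trans_eq <| by
    rw [norm_mul, norm_exp_ofReal_mul_I, mul_one, norm_real, Real.norm_of_nonneg ht]
  rw [norm_mul, norm_exp, hre]
  calc _ ≤ Real.exp (-(x * ξ₀).re - t * r) * (C * Real.exp (K * (‖ξ₀‖ + t))) := by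
        gcongr
        exact (hbd _).trans (by gcongr)
    _ = C * Real.exp (K * ‖ξ₀‖ - (x * ξ₀).re + (K - r) * t) := by
        rw [mul_left_comm, ← Real.exp_add]
        ring_nf
    _ ≤ _ := by
        rw [Real.exp_add, mul_assoc]
        gcongr
        nlinarith

theorem stmt_9_general (Φ : ℂ → ℂ) (hΦ : Differentiable ℂ Φ)
    (C K : ℝ) (hC : 0 ≤ C) (hK : 0 ≤ K)
    (hbd : ∀ ξ : ℂ, ‖Φ ξ‖ ≤ C * Real.exp (K * ‖ξ‖))
    (ξ₀ : ℂ) (θ₁ θ₂ : ℝ) (h12 : θ₁ < θ₂)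
    (x : ℂ) (hx : ∀ θ ∈ Set.Icc θ₁ θ₂, K < (x * Complex.exp ((θ : ℂ) * Complex.I)).re) :
    IntegrableOn (fun t : ℝ =>
      Complex.exp (-x * (ξ₀ + (t : ℂ) * Complex.exp ((θ₁ : ℂ) * Complex.I))) *
        Φ (ξ₀ + (t : ℂ) * Complex.exp ((θ₁ : ℂ) * Complex.I)) *
        Complex.exp ((θ₁ : ℂ) * Complex.I)) (Set.Ioi 0) ∧
    IntegrableOn (fun t : ℝ =>
      Complex.exp (-x * (ξ₀ + (t : ℂ) * Complex.exp ((θ₂ : ℂ) * Complex.I))) *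
        Φ (ξ₀ + (t : ℂ) * Complex.exp ((θ₂ : ℂ) * Complex.I)) *
        Complex.exp ((θ₂ : ℂ) * Complex.I)) (Set.Ioi 0) ∧
    (∫ t : ℝ in Set.Ioi 0,
      Complex.exp (-x * (ξ₀ + (t : ℂ) * Complex.exp ((θ₁ : ℂ) * Complex.I))) *
        Φ (ξ₀ + (t : ℂ) * Complex.exp ((θ₁ : ℂ) * Complex.I)) *
        Complex.exp ((θ₁ : ℂ) * Complex.I)) =
    ∫ t : ℝ in Set.Ioi 0,
      Complex.exp (-x * (ξ₀ + (t : ℂ) * Complex.exp ((θ₂ : ℂ) * Complex.I))) *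
        Φ (ξ₀ + (t : ℂ) * Complex.exp ((θ₂ : ℂ) * Complex.I)) *
        Complex.exp ((θ₂ : ℂ) * Complex.I) := by
  obtain ⟨a, hKa, ha⟩ := isCompact_Icc.exists_forall_le'
    (by fun_prop : Continuous fun θ : ℝ => (x * cexp (θ * I)).re).continuousOn hx
  set F : ℂ → ℂ := fun ξ => cexp (-x * ξ) * Φ ξ
  have hF : Differentiable ℂ F := by fun_prop
  have hc : 0 < a - K := sub_pos.2 hKa
  have hdecay : ∀ θ ∈ [[θ₁, θ₂]], ∀ t : ℝ, 0 ≤ t → ‖F (ξ₀ + t * cexp (θ * I))‖ ≤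
      C * Real.exp (K * ‖ξ₀‖ - (x * ξ₀).re) * Real.exp (-(a - K) * t) := by
    rw [uIcc_of_le h12.le]
    exact fun θ hθ t ht => norm_cexp_neg_mul_mul_le hC hK hbd (by linarith [ha θ hθ]) ht
  exact ⟨integrableOn_rayIntegrand hF.continuous hc (hdecay θ₁ left_mem_uIcc),
    integrableOn_rayIntegrand hF.continuous hc (hdecay θ₂ right_mem_uIcc),
    integral_rayIntegrand_eq_of_decay hF hc hdecay⟩

/-- The Laplace integral of an entire function of exponential type along the
boundary contour of a sector vanishes: the two ray integrals converge
absolutely and are equal. -/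
theorem stmt_9 (Φ : ℂ → ℂ) (hΦ : Differentiable ℂ Φ)
    (C K : ℝ) (hC : 0 ≤ C) (hK : 0 ≤ K)
    (hbd : ∀ ξ : ℂ, ‖Φ ξ‖ ≤ C * Real.exp (K * ‖ξ‖))
    (ξ₀ : ℂ) (θ₁ θ₂ : ℝ) (h12 : θ₁ < θ₂) (hap : θ₂ - θ₁ < Real.pi)
    (x : ℂ) (hx : ∀ θ ∈ Set.Icc θ₁ θ₂, K < (x * Complex.exp ((θ : ℂ) * Complex.I)).re) :
    IntegrableOn (fun t : ℝ =>
      Complex.exp (-x * (ξ₀ + (t : ℂ) * Complex.exp ((θ₁ : ℂ) * Complex.I))) *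
        Φ (ξ₀ + (t : ℂ) * Complex.exp ((θ₁ : ℂ) * Complex.I)) *
        Complex.exp ((θ₁ : ℂ) * Complex.I)) (Set.Ioi 0) ∧
    IntegrableOn (fun t : ℝ =>
      Complex.exp (-x * (ξ₀ + (t : ℂ) * Complex.exp ((θ₂ : ℂ) * Complex.I))) *
        Φ (ξ₀ + (t : ℂ) * Complex.exp ((θ₂ : ℂ) * Complex.I)) *
        Complex.exp ((θ₂ : ℂ) * Complex.I)) (Set.Ioi 0) ∧
    (∫ t : ℝ in Set.Ioi 0,
      Complex.exp (-x * (ξ₀ + (t : ℂ) * Complex.exp ((θ₁ : ℂ) * Complex.I))) *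
        Φ (ξ₀ + (t : ℂ) * Complex.exp ((θ₁ : ℂ) * Complex.I)) *
        Complex.exp ((θ₁ : ℂ) * Complex.I)) =
    ∫ t : ℝ in Set.Ioi 0,
      Complex.exp (-x * (ξ₀ + (t : ℂ) * Complex.exp ((θ₂ : ℂ) * Complex.I))) *
        Φ (ξ₀ + (t : ℂ) * Complex.exp ((θ₂ : ℂ) * Complex.I)) *
        Complex.exp ((θ₂ : ℂ) * Complex.I) :=
  stmt_9_general Φ hΦ C K hC hK hbd ξ₀ θ₁ θ₂ h12 x hx
end

section
/- Let ξ₀ ∈ ℂ, let θ₁ ≠ θ₂ be real, and let Φ be holomorphic on an open set containing the two rays {ξ₀ + t e^{iθ_k} : t ≥ 0} (k = 1, 2), with |Φ(ξ₀ + t e^{iθ_k})| ≤ C e^{K t} for all t ≥ 0 and k = 1, 2, where C, K ≥ 0. Let U = {x ∈ ℂ : Re(x e^{iθ₁}) > K and Re(x e^{iθ₂}) > K}. Then for every x ∈ U both ray integrals ∫_0^∞ e^{−x(ξ₀ + t e^{iθ_k})} Φ(ξ₀ + t e^{iθ_k}) e^{iθ_k} dt converge absolutely, the function F(x) := ∫_0^∞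 e^{−x(ξ₀ + t e^{iθ₂})} Φ(ξ₀ + t e^{iθ₂}) e^{iθ₂} dt − ∫_0^∞ e^{−x(ξ₀ + t e^{iθ₁})} Φ(ξ₀ + t e^{iθ₁}) e^{iθ₁} dt is holomorphic on U, and |F(x)| ≤ C e^{−Re(x ξ₀)} (1/(Re(x e^{iθ₁}) − K) + 1/(Re(x e^{iθ₂}) − K)) for all x ∈ U. -/
/-!
The substitution ξ = ξ₀ + t e with e = e^{iθ} turns each ray integral into e^{-x ξ₀} times the
one-sided Laplace transform of t ↦ Φ(ξ₀ + t e) e, evaluated at s = x e. The growth bound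
C e^{Kt} makes that transform converge absolutely for Re s > K, with modulus at most
C / (Re s - K); on the disc of radius δ = (Re s - K)/2 around s the s-derivative of the
integrand is dominated by C t e^{-δt}, so differentiation under the integral sign gives holomorphy.
-/

open MeasureTheory Set
open scoped Complex Real

noncomputable def laplace (g : ℝ → ℂ) (s : ℂ) : ℂ :=
  ∫ t : ℝ in Ioi 0, cexp (-s * t) * g t

lemma integral_exp_neg_mul_Ioi_zero {b : ℝ} (hb : 0 < b) :
    ∫ t : ℝ in Ioi 0, rexp (-b * t) = 1 / b := by
  rw [integral_exp_mul_Ioi (neg_neg_of_pos hb)]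
  simp

lemma integrableOn_mul_exp_neg_mul {b : ℝ} (hb : 0 < b) :
    IntegrableOn (fun t : ℝ => t * rexp (-b * t)) (Ioi 0) := by
  simpa using integrableOn_rpow_mul_exp_neg_mul_rpow (s := 1) (p := 1) (by norm_num) one_pos hb

section Laplace

variable {g : ℝ → ℂ} {C K : ℝ} {s : ℂ}

lemma norm_cexp_neg_mul_mul_le_s10 (hbd : ∀ t ∈ Ioi (0 : ℝ), ‖g t‖ ≤ C * rexp (K * t)) (s : ℂ)
    {t : ℝ} (ht : t ∈ Ioi 0) : ‖cexp (-s * t) * g t‖ ≤ C * rexp (-(s.re - K) * t) := by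
  rw [norm_mul, Complex.norm_exp]
  calc rexp (-s * t).re * ‖g t‖ ≤ rexp (-s * t).re * (C * rexp (K * t)) := by
        gcongr; exact hbd t ht
    _ = C * rexp (-(s.re - K) * t) := by
        rw [mul_left_comm, ← Real.exp_add]
        congr 2
        simp only [neg_mul, Complex.neg_re, Complex.mul_re, Complex.ofReal_re, Complex.ofReal_im,
          mul_zero, sub_zero]
        ring

lemma integrableOn_laplace_integrand (hg : AEStronglyMeasurable g (volume.restrict (Ioi 0)))
    (hbd : ∀ t ∈ Ioi (0 : ℝ), ‖g t‖ ≤ C * rexp (K * t)) (hs : K < s.re) :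
    IntegrableOn (fun t : ℝ => cexp (-s * t) * g t) (Ioi 0) :=
  Integrable.mono' ((exp_neg_integrableOn_Ioi 0 (sub_pos.2 hs)).const_mul C)
    ((Continuous.aestronglyMeasurable (by fun_prop)).mul hg)
    ((ae_restrict_iff' measurableSet_Ioi).2
      (.of_forall fun _ ht => norm_cexp_neg_mul_mul_le_s10 hbd s ht))

lemma norm_laplace_le (hbd : ∀ t ∈ Ioi (0 : ℝ), ‖g t‖ ≤ C * rexp (K * t)) (hs : K < s.re) :
    ‖laplace g s‖ ≤ C / (s.re - K) :=
  calc ‖laplace g s‖ ≤ ∫ t : ℝ in Ioi 0, C * rexp (-(s.re - K) * t) :=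
        norm_integral_le_of_norm_le ((exp_neg_integrableOn_Ioi 0 (sub_pos.2 hs)).const_mul C)
          ((ae_restrict_iff' measurableSet_Ioi).2
            (.of_forall fun _ ht => norm_cexp_neg_mul_mul_le_s10 hbd s ht))
    _ = C / (s.re - K) := by
        rw [integral_const_mul, integral_exp_neg_mul_Ioi_zero (sub_pos.2 hs), mul_one_div]

lemma hasDerivAt_laplace (hg : AEStronglyMeasurable g (volume.restrict (Ioi 0)))
    (hbd : ∀ t ∈ Ioi (0 : ℝ), ‖g t‖ ≤ C * rexp (K * t)) (hs : K < s.re) :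
    HasDerivAt (laplace g) (laplace (fun t => -t * g t) s) s := by
  set δ := (s.re - K) / 2 with hδ_def
  have hδ : 0 < δ := half_pos (sub_pos.2 hs)
  have hC : 0 ≤ C :=
    nonneg_of_mul_nonneg_left ((norm_nonneg _).trans (hbd 1 (mem_Ioi.2 one_pos))) (Real.exp_pos _)
  have hball : ∀ z ∈ Metric.ball s δ, δ ≤ z.re - K := by
    intro z hz
    have h := (Complex.abs_re_le_norm (z - s)).trans (mem_ball_iff_norm.1 hz).le
    rw [Complex.sub_re] at h
    linarith [(abs_le.1 h).1, hδ_def]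
  have hderiv_bound : ∀ t ∈ Ioi (0 : ℝ), ∀ z ∈ Metric.ball s δ,
      ‖cexp (-z * t) * (-t * g t)‖ ≤ C * (t * rexp (-δ * t)) := by
    intro t ht z hz
    calc ‖cexp (-z * t) * (-t * g t)‖ = t * ‖cexp (-z * t) * g t‖ := by
          rw [mul_left_comm, norm_mul, norm_neg, Complex.norm_real, Real.norm_of_nonneg ht.le]
      _ ≤ t * (C * rexp (-(z.re - K) * t)) :=
          mul_le_mul_of_nonneg_left (norm_cexp_neg_mul_mul_le_s10 hbd z ht) (le_of_lt ht)
      _ ≤ C * (t * rexp (-δ * t)) := by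
          rw [mul_left_comm]
          have := hball z hz
          have : 0 < t := ht
          gcongr
  have hderiv : ∀ t : ℝ, ∀ z : ℂ,
      HasDerivAt (fun z => cexp (-z * t) * g t) (cexp (-z * t) * (-t * g t)) z := by
    intro t z
    exact (((hasDerivAt_neg z).mul_const (t : ℂ)).cexp.mul_const (g t)).congr_deriv (by ring)
  exact (hasDerivAt_integral_of_dominated_loc_of_deriv_le (F := fun (z : ℂ) (t : ℝ) => cexp (-z * t) * g t)
    (F' := fun (z : ℂ) (t : ℝ) => cexp (-z * t) * (-t * g t)) (Metric.ball_mem_nhds s hδ)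
    (.of_forall fun _ => (Continuous.aestronglyMeasurable (by fun_prop)).mul hg)
    (integrableOn_laplace_integrand hg hbd hs)
    ((Continuous.aestronglyMeasurable (by fun_prop)).mul
      ((Continuous.aestronglyMeasurable (by fun_prop)).mul hg))
    ((ae_restrict_iff' measurableSet_Ioi).2 (.of_forall hderiv_bound))
    ((integrableOn_mul_exp_neg_mul hδ).const_mul C)
    (.of_forall fun t z _ => hderiv t z)).2

end Laplace

noncomputable def rayLaplace (Φ : ℂ → ℂ) (ξ₀ e x : ℂ) : ℂ :=
  ∫ t : ℝ in Ioi 0, cexp (-x * (ξ₀ + t * e)) * Φ (ξ₀ + t * e) * e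

section Ray

variable {Φ : ℂ → ℂ} {ξ₀ e x : ℂ} {C K : ℝ}

lemma rayLaplace_integrand_eq (Φ : ℂ → ℂ) (ξ₀ e x : ℂ) (t : ℝ) :
    cexp (-x * (ξ₀ + t * e)) * Φ (ξ₀ + t * e) * e =
      cexp (-(x * ξ₀)) * (cexp (-(x * e) * t) * (Φ (ξ₀ + t * e) * e)) := by
  rw [show -x * (ξ₀ + t * e) = -(x * ξ₀) + -(x * e) * t by ring, Complex.exp_add]
  ring

lemma rayLaplace_eq_laplace (Φ : ℂ → ℂ) (ξ₀ e x : ℂ) :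
    rayLaplace Φ ξ₀ e x = cexp (-(x * ξ₀)) * laplace (fun t => Φ (ξ₀ + t * e) * e) (x * e) := by
  simp_rw [rayLaplace, rayLaplace_integrand_eq, laplace]
  exact integral_const_mul _ _

lemma aestronglyMeasurable_ray_mul (hΦ : ContinuousOn (fun t : ℝ => Φ (ξ₀ + t * e)) (Ioi 0)) :
    AEStronglyMeasurable (fun t : ℝ => Φ (ξ₀ + t * e) * e) (volume.restrict (Ioi 0)) :=
  (hΦ.mul continuousOn_const).aestronglyMeasurable measurableSet_Ioi

lemma norm_ray_mul_le (he : ‖e‖ = 1)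
    (hbd : ∀ t : ℝ, 0 ≤ t → ‖Φ (ξ₀ + t * e)‖ ≤ C * rexp (K * t)) :
    ∀ t ∈ Ioi (0 : ℝ), ‖Φ (ξ₀ + t * e) * e‖ ≤ C * rexp (K * t) := fun t ht => by
  rw [norm_mul, he, mul_one]
  exact hbd t (le_of_lt ht)

lemma integrableOn_rayLaplace_integrand (he : ‖e‖ = 1)
    (hΦ : ContinuousOn (fun t : ℝ => Φ (ξ₀ + t * e)) (Ioi 0))
    (hbd : ∀ t : ℝ, 0 ≤ t → ‖Φ (ξ₀ + t * e)‖ ≤ C * rexp (K * t)) (hx : K < (x * e).re) :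
    IntegrableOn (fun t : ℝ => cexp (-x * (ξ₀ + t * e)) * Φ (ξ₀ + t * e) * e) (Ioi 0) := by
  simp_rw [rayLaplace_integrand_eq]
  exact (integrableOn_laplace_integrand (aestronglyMeasurable_ray_mul hΦ)
    (norm_ray_mul_le he hbd) hx).const_mul _

lemma norm_rayLaplace_le (he : ‖e‖ = 1)
    (hbd : ∀ t : ℝ, 0 ≤ t → ‖Φ (ξ₀ + t * e)‖ ≤ C * rexp (K * t)) (hx : K < (x * e).re) :
    ‖rayLaplace Φ ξ₀ e x‖ ≤ rexp (-(x * ξ₀).re) * (C / ((x * e).re - K)) := by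
  rw [rayLaplace_eq_laplace, norm_mul, Complex.norm_exp, Complex.neg_re]
  exact mul_le_mul_of_nonneg_left (norm_laplace_le (norm_ray_mul_le he hbd) hx)
    (Real.exp_pos _).le

lemma differentiableAt_rayLaplace (he : ‖e‖ = 1)
    (hΦ : ContinuousOn (fun t : ℝ => Φ (ξ₀ + t * e)) (Ioi 0))
    (hbd : ∀ t : ℝ, 0 ≤ t → ‖Φ (ξ₀ + t * e)‖ ≤ C * rexp (K * t)) (hx : K < (x * e).re) :
    DifferentiableAt ℂ (rayLaplace Φ ξ₀ e) x := by
  have hL := (hasDerivAt_laplace (aestronglyMeasurable_ray_mul hΦ) (norm_ray_mul_le he hbd)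
    hx).differentiableAt
  have hLe : DifferentiableAt ℂ (fun y => laplace (fun t => Φ (ξ₀ + t * e) * e) (y * e)) x :=
    DifferentiableAt.comp (f := fun y => y * e) x hL (differentiableAt_id.mul_const e)
  rw [funext (rayLaplace_eq_laplace Φ ξ₀ e)]
  exact (by fun_prop : DifferentiableAt ℂ (fun y : ℂ => cexp (-(y * ξ₀))) x).mul hLe

end Ray

theorem stmt_10_general (ξ₀ : ℂ) (θ₁ θ₂ : ℝ)
    (Ω : Set ℂ)
    (hray1 : ∀ t : ℝ, 0 ≤ t → ξ₀ + (t : ℂ) * Complex.exp ((θ₁ : ℂ) * Complex.I) ∈ Ω)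
    (hray2 : ∀ t : ℝ, 0 ≤ t → ξ₀ + (t : ℂ) * Complex.exp ((θ₂ : ℂ) * Complex.I) ∈ Ω)
    (Φ : ℂ → ℂ) (hΦ : DifferentiableOn ℂ Φ Ω)
    (C K : ℝ)
    (hbd1 : ∀ t : ℝ, 0 ≤ t →
      ‖Φ (ξ₀ + (t : ℂ) * Complex.exp ((θ₁ : ℂ) * Complex.I))‖ ≤ C * Real.exp (K * t))
    (hbd2 : ∀ t : ℝ, 0 ≤ t →
      ‖Φ (ξ₀ + (t : ℂ) * Complex.exp ((θ₂ : ℂ) * Complex.I))‖ ≤ C * Real.exp (K * t))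
    (U : Set ℂ) (hU : U = {x : ℂ | K < (x * Complex.exp ((θ₁ : ℂ) * Complex.I)).re ∧
      K < (x * Complex.exp ((θ₂ : ℂ) * Complex.I)).re})
    (F : ℂ → ℂ) (hF : ∀ x : ℂ, F x =
      (∫ t : ℝ in Set.Ioi 0,
        Complex.exp (-x * (ξ₀ + (t : ℂ) * Complex.exp ((θ₂ : ℂ) * Complex.I))) *
          Φ (ξ₀ + (t : ℂ) * Complex.exp ((θ₂ : ℂ) * Complex.I)) *
          Complex.exp ((θ₂ : ℂ) * Complex.I)) -
      ∫ t : ℝ in Set.Ioi 0,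
        Complex.exp (-x * (ξ₀ + (t : ℂ) * Complex.exp ((θ₁ : ℂ) * Complex.I))) *
          Φ (ξ₀ + (t : ℂ) * Complex.exp ((θ₁ : ℂ) * Complex.I)) *
          Complex.exp ((θ₁ : ℂ) * Complex.I)) :
    (∀ x ∈ U,
      IntegrableOn (fun t : ℝ =>
        Complex.exp (-x * (ξ₀ + (t : ℂ) * Complex.exp ((θ₁ : ℂ) * Complex.I))) *
          Φ (ξ₀ + (t : ℂ) * Complex.exp ((θ₁ : ℂ) * Complex.I)) *
          Complex.exp ((θ₁ : ℂ) * Complex.I)) (Set.Ioi 0) ∧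
      IntegrableOn (fun t : ℝ =>
        Complex.exp (-x * (ξ₀ + (t : ℂ) * Complex.exp ((θ₂ : ℂ) * Complex.I))) *
          Φ (ξ₀ + (t : ℂ) * Complex.exp ((θ₂ : ℂ) * Complex.I)) *
          Complex.exp ((θ₂ : ℂ) * Complex.I)) (Set.Ioi 0)) ∧
    DifferentiableOn ℂ F U ∧
    ∀ x ∈ U, ‖F x‖ ≤ C * Real.exp (-(x * ξ₀).re) *
      (1 / ((x * Complex.exp ((θ₁ : ℂ) * Complex.I)).re - K) +
       1 / ((x * Complex.exp ((θ₂ : ℂ) * Complex.I)).re - K)) := by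
  have hcont : ∀ θ : ℝ, (∀ t : ℝ, 0 ≤ t → ξ₀ + t * cexp (θ * Complex.I) ∈ Ω) →
      ContinuousOn (fun t : ℝ => Φ (ξ₀ + t * cexp (θ * Complex.I))) (Ioi 0) :=
    fun θ hray => hΦ.continuousOn.comp (by fun_prop) fun t ht => hray t (le_of_lt ht)
  have he := Complex.norm_exp_ofReal_mul_I
  obtain rfl : F = fun x => rayLaplace Φ ξ₀ (cexp (θ₂ * Complex.I)) x -
      rayLaplace Φ ξ₀ (cexp (θ₁ * Complex.I)) x := funext hF
  subst hU
  refine ⟨fun x hx => ⟨integrableOn_rayLaplace_integrand (he θ₁) (hcont θ₁ hray1) hbd1 hx.1,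
      integrableOn_rayLaplace_integrand (he θ₂) (hcont θ₂ hray2) hbd2 hx.2⟩,
    fun x hx => ((differentiableAt_rayLaplace (he θ₂) (hcont θ₂ hray2) hbd2 hx.2).sub
      (differentiableAt_rayLaplace (he θ₁) (hcont θ₁ hray1) hbd1 hx.1)).differentiableWithinAt,
    fun x hx => ?_⟩
  calc _ ≤ ‖rayLaplace Φ ξ₀ (cexp (θ₂ * Complex.I)) x‖ +
        ‖rayLaplace Φ ξ₀ (cexp (θ₁ * Complex.I)) x‖ := norm_sub_le _ _
    _ ≤ _ := add_le_add (norm_rayLaplace_le (he θ₂) hbd2 hx.2) (norm_rayLaplace_le (he θ₁) hbd1 hx.1)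
    _ = _ := by ring

/-- The strict Laplace transform of a major of exponential type along the
two-ray contour: absolute convergence, holomorphy, and exponential-type bound
in the dual directions. -/
theorem stmt_10 (ξ₀ : ℂ) (θ₁ θ₂ : ℝ) (hθ : θ₁ ≠ θ₂)
    (Ω : Set ℂ) (hΩ : IsOpen Ω)
    (hray1 : ∀ t : ℝ, 0 ≤ t → ξ₀ + (t : ℂ) * Complex.exp ((θ₁ : ℂ) * Complex.I) ∈ Ω)
    (hray2 : ∀ t : ℝ, 0 ≤ t → ξ₀ + (t : ℂ) * Complex.exp ((θ₂ : ℂ) * Complex.I) ∈ Ω)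
    (Φ : ℂ → ℂ) (hΦ : DifferentiableOn ℂ Φ Ω)
    (C K : ℝ) (hC : 0 ≤ C) (hK : 0 ≤ K)
    (hbd1 : ∀ t : ℝ, 0 ≤ t →
      ‖Φ (ξ₀ + (t : ℂ) * Complex.exp ((θ₁ : ℂ) * Complex.I))‖ ≤ C * Real.exp (K * t))
    (hbd2 : ∀ t : ℝ, 0 ≤ t →
      ‖Φ (ξ₀ + (t : ℂ) * Complex.exp ((θ₂ : ℂ) * Complex.I))‖ ≤ C * Real.exp (K * t))
    (U : Set ℂ) (hU : U = {x : ℂ | K < (x * Complex.exp ((θ₁ : ℂ) * Complex.I)).re ∧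
      K < (x * Complex.exp ((θ₂ : ℂ) * Complex.I)).re})
    (F : ℂ → ℂ) (hF : ∀ x : ℂ, F x =
      (∫ t : ℝ in Set.Ioi 0,
        Complex.exp (-x * (ξ₀ + (t : ℂ) * Complex.exp ((θ₂ : ℂ) * Complex.I))) *
          Φ (ξ₀ + (t : ℂ) * Complex.exp ((θ₂ : ℂ) * Complex.I)) *
          Complex.exp ((θ₂ : ℂ) * Complex.I)) -
      ∫ t : ℝ in Set.Ioi 0,
        Complex.exp (-x * (ξ₀ + (t : ℂ) * Complex.exp ((θ₁ : ℂ) * Complex.I))) *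
          Φ (ξ₀ + (t : ℂ) * Complex.exp ((θ₁ : ℂ) * Complex.I)) *
          Complex.exp ((θ₁ : ℂ) * Complex.I)) :
    (∀ x ∈ U,
      IntegrableOn (fun t : ℝ =>
        Complex.exp (-x * (ξ₀ + (t : ℂ) * Complex.exp ((θ₁ : ℂ) * Complex.I))) *
          Φ (ξ₀ + (t : ℂ) * Complex.exp ((θ₁ : ℂ) * Complex.I)) *
          Complex.exp ((θ₁ : ℂ) * Complex.I)) (Set.Ioi 0) ∧
      IntegrableOn (fun t : ℝ =>
        Complex.exp (-x * (ξ₀ + (t : ℂ) * Complex.exp ((θ₂ : ℂ) * Complex.I))) *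
          Φ (ξ₀ + (t : ℂ) * Complex.exp ((θ₂ : ℂ) * Complex.I)) *
          Complex.exp ((θ₂ : ℂ) * Complex.I)) (Set.Ioi 0)) ∧
    DifferentiableOn ℂ F U ∧
    ∀ x ∈ U, ‖F x‖ ≤ C * Real.exp (-(x * ξ₀).re) *
      (1 / ((x * Complex.exp ((θ₁ : ℂ) * Complex.I)).re - K) +
       1 / ((x * Complex.exp ((θ₂ : ℂ) * Complex.I)).re - K)) :=
  stmt_10_general ξ₀ θ₁ θ₂ Ω hray1 hray2 Φ hΦ C K hbd1 hbd2 U hU F hF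
end

section
/- Let η₁ ∈ ℂ ∖ {0} and let g be holomorphic on an open set containing the half-open segment {t η₁ : 0 < t ≤ 1}, such that the primitive G(t) := lim_{ε→0⁺} ∫_ε^t g(s η₁) η₁ ds exists for every t ∈ (0, 1] and G(t) → 0 as t → 0⁺. Let Φ(ζ) = (1/(2πi)) lim_{ε→0⁺} ∫_ε^1 g(t η₁) η₁ / (t η₁ − ζ) dt for ζ off the closed segment {t η₁ : 0 ≤ t ≤ 1}. Then for every δ ∈ (0, π) and every ε > 0 there is ρ > 0 such that every ζ with 0 < |ζ| < ρ and δ ≤ |Arg(ζ/η₁)| (Arg taken in (−π, π]) satisfies |ζ · Φ(ζ)| ≤ ε. In other words, ζ Φ(ζ) → 0 as ζ → 0 uniformly in every angular sector not adherent to the segment. -/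
/-
Put `w = ζ / η₁`; then `ζ Φ(ζ)` is `(2πi)⁻¹ · w ∫₀¹ f(t) / (t - w) dt` with `f(t) = g(t η₁) η₁`.
In the sector `δ ≤ |arg w|` the law of cosines gives `|t - w|² ≥ (1 - |cos δ|)(t² + |w|²)`
for `t ≥ 0`. Integrating by parts against the primitive `G` (which exists by hypothesis and
vanishes at `0⁺`) leaves two boundary terms, bounded by `|w| |G(1)|` and by `|G(e)|` at the
cutoff `e → 0⁺`, and the integral `w ∫ G(t) / (t - w)² dt`, which the sector bound dominates
by the Poisson integral `∫ |w| |G(t)| / (t² + |w|²) dt`. The Poisson kernel has total mass at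
most `π/2` and concentrates at `0` as `|w| → 0`, where `G` is small.
-/

open MeasureTheory Topology Filter Set

theorem sq_norm_ofReal_sub (t : ℝ) (w : ℂ) :
    ‖(t : ℂ) - w‖ ^ 2 = t ^ 2 - 2 * t * w.re + ‖w‖ ^ 2 := by
  rw [← Complex.normSq_eq_norm_sq, ← Complex.normSq_eq_norm_sq, Complex.normSq_apply,
    Complex.normSq_apply]
  simp only [Complex.sub_re, Complex.sub_im, Complex.ofReal_re, Complex.ofReal_im]
  ring

theorem re_le_norm_mul_abs_cos {δ : ℝ} {w : ℂ} (hδ : 0 ≤ δ) (hw : δ ≤ |w.arg|) :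
    w.re ≤ ‖w‖ * |Real.cos δ| := by
  have hcos : Real.cos w.arg ≤ Real.cos δ := by
    rw [← Real.cos_abs w.arg]
    exact Real.cos_le_cos_of_nonneg_of_le_pi hδ (Complex.abs_arg_le_pi w) hw
  calc w.re = ‖w‖ * Real.cos w.arg := (Complex.norm_mul_cos_arg w).symm
    _ ≤ ‖w‖ * |Real.cos δ| := by gcongr; exact hcos.trans (le_abs_self _)

theorem mul_sq_add_sq_le_sq_norm_sub {δ : ℝ} {w : ℂ} (hδ : 0 ≤ δ) (hw : δ ≤ |w.arg|)
    {t : ℝ} (ht : 0 ≤ t) :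
    (1 - |Real.cos δ|) * (t ^ 2 + ‖w‖ ^ 2) ≤ ‖(t : ℂ) - w‖ ^ 2 := by
  have hre := re_le_norm_mul_abs_cos hδ hw
  rw [sq_norm_ofReal_sub]
  nlinarith [mul_nonneg (abs_nonneg (Real.cos δ)) (sq_nonneg (t - ‖w‖)),
    mul_le_mul_of_nonneg_left hre ht]

theorem ofReal_ne_of_le_abs_arg {δ : ℝ} {w : ℂ} (hδ : 0 < δ) (hw : δ ≤ |w.arg|) {t : ℝ}
    (ht : 0 ≤ t) : (t : ℂ) ≠ w := by
  rintro rfl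
  rw [Complex.arg_ofReal_of_nonneg ht, abs_zero] at hw
  linarith

theorem abs_cos_lt_one_of_pos_of_lt_pi {δ : ℝ} (hδ : 0 < δ) (hδπ : δ < Real.pi) :
    |Real.cos δ| < 1 := by
  have := Real.sin_pos_of_pos_of_lt_pi hδ hδπ
  rw [← sq_lt_one_iff_abs_lt_one, ← Real.sin_sq_add_cos_sq δ]
  nlinarith

theorem mul_mul_norm_div_sub_le {δ : ℝ} {w : ℂ} (hδ : 0 ≤ δ) (hw : δ ≤ |w.arg|) {t x : ℝ}
    (ht : 0 ≤ t) (hx : 0 ≤ x) (hxt : x ^ 2 ≤ t ^ 2 + ‖w‖ ^ 2) (z : ℂ) :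
    (1 - |Real.cos δ|) * (x * ‖z / ((t : ℂ) - w)‖) ≤ ‖z‖ := by
  have hc0 : 0 ≤ 1 - |Real.cos δ| := sub_nonneg.mpr (Real.abs_cos_le_one δ)
  have hc1 : 1 - |Real.cos δ| ≤ 1 := sub_le_self _ (abs_nonneg _)
  have hlow : (1 - |Real.cos δ|) * x ≤ ‖(t : ℂ) - w‖ := by
    rw [← pow_le_pow_iff_left₀ (by positivity) (norm_nonneg _) two_ne_zero]
    calc ((1 - |Real.cos δ|) * x) ^ 2 ≤ (1 - |Real.cos δ|) * x ^ 2 := by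
          rw [mul_pow]; gcongr; nlinarith
      _ ≤ _ := (mul_le_mul_of_nonneg_left hxt hc0).trans (mul_sq_add_sq_le_sq_norm_sub hδ hw ht)
  rw [norm_div, ← mul_assoc, mul_div_assoc']
  rcases (norm_nonneg ((t : ℂ) - w)).eq_or_lt with h0 | hpos
  · rw [← h0, div_zero]
    positivity
  · rw [div_le_iff₀ hpos]
    exact mul_le_mul_of_nonneg_right hlow (norm_nonneg z) |>.trans_eq (mul_comm _ _)

theorem mul_norm_div_sq_le {δ : ℝ} {w : ℂ} (hδ : 0 ≤ δ) (hw : δ ≤ |w.arg|) {t : ℝ}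
    (ht : 0 < t) (z : ℂ) :
    (1 - |Real.cos δ|) * ‖z / ((t : ℂ) - w) ^ 2‖ ≤ ‖z‖ / (t ^ 2 + ‖w‖ ^ 2) := by
  have hsec := mul_sq_add_sq_le_sq_norm_sub hδ hw ht.le
  rw [norm_div, norm_pow]
  rcases (sq_nonneg ‖(t : ℂ) - w‖).eq_or_lt with h0 | hpos
  · rw [← h0, div_zero, mul_zero]
    positivity
  · rw [mul_div_assoc', div_le_div_iff₀ hpos (by positivity)]
    nlinarith [norm_nonneg z]

theorem integral_div_sq_add_sq_le {s : ℝ} (hs : 0 < s) {e : ℝ} (he : 0 ≤ e) (b : ℝ) :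
    ∫ t in e..b, s / (t ^ 2 + s ^ 2) ≤ Real.pi / 2 := by
  have hderiv : ∀ t : ℝ, HasDerivAt (fun x => Real.arctan (x / s)) (s / (t ^ 2 + s ^ 2)) t := by
    intro t
    refine (((hasDerivAt_id' t).div_const s).arctan).congr_deriv ?_
    field_simp
    ring
  rw [intervalIntegral.integral_eq_sub_of_hasDerivAt (fun t _ => hderiv t)
    ((continuous_const.div (by fun_prop) fun t => by positivity).intervalIntegrable _ _)]
  have := Real.arctan_lt_pi_div_two (b / s)
  have : 0 ≤ Real.arctan (e / s) := Real.arctan_nonneg.mpr (by positivity)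
  linarith

theorem exists_integral_poisson_le {φ : ℝ → ℝ} (hφc : ContinuousOn φ (Ioc 0 1))
    (hφ : Tendsto φ (𝓝[>] 0) (𝓝 0)) {ε : ℝ} (hε : 0 < ε) :
    ∃ ρ > 0, ∀ s, 0 < s → s < ρ → ∀ e ∈ Ioc (0 : ℝ) 1,
      ∫ t in e..1, s * φ t / (t ^ 2 + s ^ 2) ≤ ε := by
  obtain ⟨u, hu, hφu⟩ := mem_nhdsGT_iff_exists_Ioc_subset.mp
    (hφ (Iic_mem_nhds (div_pos hε Real.pi_pos)))
  set t₀ := min u 1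
  have ht₀ : 0 < t₀ := lt_min hu one_pos
  have ht₀1 : t₀ ≤ 1 := min_le_right _ _
  have hφt₀ : ∀ t ∈ Ioc 0 t₀, φ t ≤ ε / Real.pi :=
    fun t ht => hφu ⟨ht.1, ht.2.trans (min_le_left _ _)⟩
  obtain ⟨M, hM⟩ := isCompact_Icc.exists_bound_of_continuousOn
    (hφc.mono (Icc_subset_Ioc ht₀ le_rfl))
  have hM0 : 0 ≤ M := (norm_nonneg _).trans (hM t₀ ⟨le_rfl, ht₀1⟩)
  refine ⟨ε * t₀ ^ 2 / (2 * (M + 1)), by positivity, fun s hs hsρ e he => ?_⟩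
  have hpoint : ∀ t ∈ Icc e 1, s * φ t / (t ^ 2 + s ^ 2)
      ≤ ε / Real.pi * (s / (t ^ 2 + s ^ 2)) + s * M / t₀ ^ 2 := by
    rintro t ⟨het, ht1⟩
    have ht : 0 < t := he.1.trans_le het
    have hker : 0 ≤ s / (t ^ 2 + s ^ 2) := by positivity
    rw [mul_div_right_comm, mul_comm]
    rcases le_total t t₀ with htt₀ | ht₀t
    · have : 0 ≤ s * M / t₀ ^ 2 := by positivity
      nlinarith [mul_le_mul_of_nonneg_left (hφt₀ t ⟨ht, htt₀⟩) hker]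
    · have hφM : φ t ≤ M := (le_abs_self _).trans (hM t ⟨ht₀t, ht1⟩)
      have hker' : s / (t ^ 2 + s ^ 2) ≤ s / t₀ ^ 2 := by
        gcongr
        nlinarith
      have : 0 ≤ ε / Real.pi * (s / (t ^ 2 + s ^ 2)) := by positivity
      have : s * M / t₀ ^ 2 = M * (s / t₀ ^ 2) := by ring
      nlinarith [mul_le_mul_of_nonneg_right hφM hker, mul_le_mul_of_nonneg_left hker' hM0]
  have hcont : ContinuousOn (fun t => s * φ t / (t ^ 2 + s ^ 2)) (uIcc e 1) := by
    rw [uIcc_of_le he.2]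
    exact ((continuousOn_const.mul (hφc.mono (Icc_subset_Ioc he.1 le_rfl))).div
      (by fun_prop) fun t _ => by positivity)
  have hker : Continuous fun t : ℝ => s / (t ^ 2 + s ^ 2) :=
    continuous_const.div (by fun_prop) fun t => by positivity
  have hsM : s * M / t₀ ^ 2 ≤ ε / 2 := by
    rw [div_le_iff₀ (by positivity)]
    rw [lt_div_iff₀ (by positivity)] at hsρ
    nlinarith
  calc ∫ t in e..1, s * φ t / (t ^ 2 + s ^ 2)
      ≤ ∫ t in e..1, (ε / Real.pi * (s / (t ^ 2 + s ^ 2)) + s * M / t₀ ^ 2) :=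
        intervalIntegral.integral_mono_on he.2 hcont.intervalIntegrable
          (((hker.const_mul _).add continuous_const).intervalIntegrable _ _) hpoint
    _ = ε / Real.pi * (∫ t in e..1, s / (t ^ 2 + s ^ 2)) + (1 - e) * (s * M / t₀ ^ 2) := by
        rw [intervalIntegral.integral_add ((hker.const_mul _).intervalIntegrable _ _)
          intervalIntegrable_const, intervalIntegral.integral_const_mul,
          intervalIntegral.integral_const, smul_eq_mul]
    _ ≤ ε / Real.pi * (Real.pi / 2) + s * M / t₀ ^ 2 := by
        gcongr
        · exact integral_div_sq_add_sq_le hs he.1.le 1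
        · nlinarith [he.1, show 0 ≤ s * M / t₀ ^ 2 by positivity]
    _ ≤ ε := by
        have : ε / Real.pi * (Real.pi / 2) = ε / 2 := by field_simp
        linarith

theorem norm_integral_div_sq_le {G : ℝ → ℂ} {δ : ℝ} {w : ℂ} (hδ : 0 ≤ δ) (hw : δ ≤ |w.arg|)
    {e : ℝ} (he : e ∈ Ioc 0 1) (hGc : ContinuousOn G (Icc e 1)) :
    (1 - |Real.cos δ|) * (‖w‖ * ‖∫ t in e..1, G t / ((t : ℂ) - w) ^ 2‖) ≤
      ∫ t in e..1, ‖w‖ * ‖G t‖ / (t ^ 2 + ‖w‖ ^ 2) := by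
  have hc : 0 ≤ 1 - |Real.cos δ| := sub_nonneg.mpr (Real.abs_cos_le_one δ)
  have hbound : ‖∫ t in e..1, ((1 - |Real.cos δ| : ℝ) : ℂ) * (G t / ((t : ℂ) - w) ^ 2)‖ ≤
      ∫ t in e..1, ‖G t‖ / (t ^ 2 + ‖w‖ ^ 2) := by
    refine intervalIntegral.norm_integral_le_of_norm_le he.2 (Eventually.of_forall ?_) ?_
    · intro t ht
      rw [norm_mul, Complex.norm_real, Real.norm_of_nonneg hc]
      exact mul_norm_div_sq_le hδ hw (he.1.trans ht.1) _
    · exact ContinuousOn.intervalIntegrable_of_Icc he.2 <| (hGc.norm.div (by fun_prop)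
        fun t ht => (by nlinarith [he.1.trans_le ht.1, norm_nonneg w] : t ^ 2 + ‖w‖ ^ 2 ≠ 0))
  rw [intervalIntegral.integral_const_mul, norm_mul, Complex.norm_real,
    Real.norm_of_nonneg hc] at hbound
  simp only [mul_div_assoc, intervalIntegral.integral_const_mul]
  nlinarith [norm_nonneg w]

section Primitive

variable {E : Type*} [NormedAddCommGroup E] {f G : ℝ → E} {a b : ℝ}

theorem ContinuousOn.intervalIntegrable_of_mem_Ioc (hf : ContinuousOn f (Ioc a b)) {x y : ℝ}
    (hx : x ∈ Ioc a b) (hy : y ∈ Ioc a b) : IntervalIntegrable f volume x y :=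
  (hf.mono (ordConnected_Ioc.uIcc_subset hx hy)).intervalIntegrable

variable [NormedSpace ℝ E]

theorem eq_add_integral_of_tendsto_integral (hf : ContinuousOn f (Ioc a b))
    (hG : ∀ t ∈ Ioc a b, Tendsto (fun ε => ∫ s in ε..t, f s) (𝓝[>] a) (𝓝 (G t)))
    {x t : ℝ} (hx : x ∈ Ioc a b) (ht : t ∈ Ioc a b) : G t = G x + ∫ s in x..t, f s := by
  have hsplit : ∀ᶠ ε in 𝓝[>] a, (∫ s in ε..x, f s) + ∫ s in x..t, f s = ∫ s in ε..t, f s := by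
    filter_upwards [Ioo_mem_nhdsGT (lt_min hx.1 ht.1)] with ε hε
    have hεmem : ε ∈ Ioc a b := ⟨hε.1, hε.2.le.trans ((min_le_left _ _).trans hx.2)⟩
    exact intervalIntegral.integral_add_adjacent_intervals
      (hf.intervalIntegrable_of_mem_Ioc hεmem hx) (hf.intervalIntegrable_of_mem_Ioc hx ht)
  exact tendsto_nhds_unique (hG t ht) (((hG x hx).add_const _).congr' hsplit)

theorem continuousOn_of_tendsto_integral (hf : ContinuousOn f (Ioc a b))
    (hG : ∀ t ∈ Ioc a b, Tendsto (fun ε => ∫ s in ε..t, f s) (𝓝[>] a) (𝓝 (G t))) :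
    ContinuousOn G (Ioc a b) := by
  intro t ht
  obtain ⟨x, hax, hxt⟩ := exists_between ht.1
  have hx : x ∈ Ioc a b := ⟨hax, hxt.le.trans ht.2⟩
  have hsub : Icc x b ⊆ Ioc a b := Icc_subset_Ioc hx.1 le_rfl
  have hprim : ContinuousOn (fun s => G x + ∫ u in x..s, f u) (Icc x b) := by
    refine continuousOn_const.add ?_
    rw [← uIcc_of_le hx.2] at hsub ⊢
    exact intervalIntegral.continuousOn_primitive_interval
      ((hf.mono hsub).integrableOn_compact isCompact_uIcc)
  refine ((hprim.congr fun s hs => eq_add_integral_of_tendsto_integral hf hG hx (hsub hs))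
    t ⟨hxt.le, ht.2⟩).mono_of_mem_nhdsWithin ?_
  exact mem_nhdsWithin.mpr ⟨Ioi x, isOpen_Ioi, hxt,
    fun s hs => ⟨le_of_lt hs.1, hs.2.2⟩⟩

theorem hasDerivAt_of_tendsto_integral [CompleteSpace E] (hf : ContinuousOn f (Ioc a b))
    (hG : ∀ t ∈ Ioc a b, Tendsto (fun ε => ∫ s in ε..t, f s) (𝓝[>] a) (𝓝 (G t)))
    {x : ℝ} (hx : x ∈ Ioo a b) : HasDerivAt G (f x) x := by
  have hx' : x ∈ Ioc a b := Ioo_subset_Ioc_self hx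
  have hprim : HasDerivAt (fun t => G x + ∫ s in x..t, f s) (f x) x :=
    (intervalIntegral.integral_hasDerivAt_right (hf.intervalIntegrable_of_mem_Ioc hx' hx')
      ((hf.mono Ioo_subset_Ioc_self).stronglyMeasurableAtFilter isOpen_Ioo x hx)
      (hf.continuousAt (Ioc_mem_nhds hx.1 hx.2))).const_add (G x)
  refine hprim.congr_of_eventuallyEq ?_
  filter_upwards [Ioo_mem_nhds hx.1 hx.2] with t ht
  exact eq_add_integral_of_tendsto_integral hf hG hx' (Ioo_subset_Ioc_self ht)

end Primitive

theorem integral_div_ofReal_sub_eq {f G : ℝ → ℂ} {w : ℂ} {a b : ℝ} (hab : a ≤ b)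
    (hw : ∀ t ∈ Icc a b, (t : ℂ) ≠ w) (hf : IntervalIntegrable f volume a b)
    (hGc : ContinuousOn G (Icc a b)) (hG : ∀ t ∈ Ioo a b, HasDerivAt G (f t) t) :
    ∫ t in a..b, f t / (t - w) =
      G b / (b - w) - G a / (a - w) + ∫ t in a..b, G t / ((t : ℂ) - w) ^ 2 := by
  have hne : ∀ t ∈ Icc a b, (t : ℂ) - w ≠ 0 := fun t ht => sub_ne_zero.mpr (hw t ht)
  have hu : ∀ t ∈ Icc a b,
      HasDerivAt (fun x : ℝ => ((x : ℂ) - w)⁻¹) (-1 / ((t : ℂ) - w) ^ 2) t := fun t ht => by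
    simpa using ((hasDerivAt_id t).ofReal_comp.sub_const w).fun_inv (hne t ht)
  have hu'c : ContinuousOn (fun t : ℝ => -1 / ((t : ℂ) - w) ^ 2) (Icc a b) :=
    continuousOn_const.div (by fun_prop) fun t ht => pow_ne_zero 2 (hne t ht)
  rw [← uIcc_of_le hab] at hGc hu hu'c
  have := intervalIntegral.integral_mul_deriv_eq_deriv_mul_of_hasDeriv_right
    (fun t ht => (hu t ht).continuousAt.continuousWithinAt) hGc
    (fun t ht => (hu t (Ioo_subset_Icc_self ht)).hasDerivWithinAt)
    (fun t ht => (hG t (by rwa [min_eq_left hab, max_eq_right hab] at ht)).hasDerivWithinAt)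
    hu'c.intervalIntegrable hf
  rw [intervalIntegral.integral_congr (g := fun t => ((t : ℂ) - w)⁻¹ * f t)
    (fun t _ => div_eq_inv_mul _ _), this, sub_eq_add_neg, ← intervalIntegral.integral_neg]
  simp only [div_eq_inv_mul]
  congr 1
  exact intervalIntegral.integral_congr fun t _ => by ring

theorem eventually_norm_mul_integral_div_sub_le {f G : ℝ → ℂ} (hf : ContinuousOn f (Ioc 0 1))
    (hG : ∀ t ∈ Ioc (0 : ℝ) 1, Tendsto (fun ε => ∫ s in ε..t, f s) (𝓝[>] 0) (𝓝 (G t)))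
    (hGlim : Tendsto G (𝓝[>] 0) (𝓝 0)) {δ : ℝ} (hδ : 0 < δ) (hδπ : δ < Real.pi)
    {ε : ℝ} (hε : 0 < ε) :
    ∃ ρ > 0, ∀ w : ℂ, w ≠ 0 → ‖w‖ < ρ → δ ≤ |w.arg| →
      ∀ᶠ e in 𝓝[>] 0, ‖w * ∫ t in e..1, f t / (t - w)‖ ≤ ε := by
  set c := 1 - |Real.cos δ|
  have hc : 0 < c := sub_pos.mpr (abs_cos_lt_one_of_pos_of_lt_pi hδ hδπ)
  have hGc := continuousOn_of_tendsto_integral hf hG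
  have hGnorm : Tendsto (fun t => ‖G t‖) (𝓝[>] 0) (𝓝 0) := by simpa using hGlim.norm
  obtain ⟨ρ₁, hρ₁, hpoisson⟩ :=
    exists_integral_poisson_le hGc.norm hGnorm (by positivity : 0 < c * ε / 3)
  refine ⟨min ρ₁ (c * ε / (3 * (‖G 1‖ + 1))), by positivity, fun w hw0 hwρ hwδ => ?_⟩
  set r := ‖w‖
  have hr : 0 < r := norm_pos_iff.mpr hw0
  filter_upwards [Ioo_mem_nhdsGT one_pos,
    hGnorm (Iic_mem_nhds (by positivity : 0 < c * ε / 3))] with e he hGe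
  have he' : e ∈ Ioc 0 1 := Ioo_subset_Ioc_self he
  rw [integral_div_ofReal_sub_eq he.2.le
    (fun t ht => ofReal_ne_of_le_abs_arg hδ hwδ (he.1.le.trans ht.1))
    (hf.intervalIntegrable_of_mem_Ioc he' ⟨one_pos, le_rfl⟩)
    (hGc.mono (Icc_subset_Ioc he.1 le_rfl))
    (fun t ht => hasDerivAt_of_tendsto_integral hf hG ⟨he.1.trans ht.1, ht.2⟩)]
  have h1 : r * ‖G 1 / ((1 : ℝ) - w)‖ ≤ ε / 3 := by
    have hd := mul_mul_norm_div_sub_le hδ.le hwδ zero_le_one zero_le_one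
      (by nlinarith [norm_nonneg w]) (G 1)
    have hrρ : r * (3 * (‖G 1‖ + 1)) < c * ε :=
      (lt_div_iff₀ (by positivity)).mp (hwρ.trans_le (min_le_right _ _))
    rw [one_mul] at hd
    nlinarith [norm_nonneg (G 1), norm_nonneg (G 1 / ((1 : ℝ) - w))]
  have h2 : r * ‖G e / (e - w)‖ ≤ ε / 3 := by
    have hd := mul_mul_norm_div_sub_le hδ.le hwδ he.1.le (norm_nonneg w)
      (by nlinarith) (G e)
    exact le_of_mul_le_mul_left (hd.trans (hGe.trans_eq (mul_div_assoc _ _ _))) hc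
  have h3 : r * ‖∫ t in e..1, G t / ((t : ℂ) - w) ^ 2‖ ≤ ε / 3 := by
    have := (norm_integral_div_sq_le hδ.le hwδ he' (hGc.mono (Icc_subset_Ioc he.1 le_rfl))).trans
      (hpoisson r hr (hwρ.trans_le (min_le_left _ _)) e he')
    rw [mul_div_assoc] at this
    exact le_of_mul_le_mul_left this hc
  calc _ = r * ‖G 1 / ((1 : ℝ) - w) - G e / (e - w) + ∫ t in e..1, G t / ((t : ℂ) - w) ^ 2‖ :=
        norm_mul _ _
    _ ≤ r * (‖G 1 / ((1 : ℝ) - w)‖ + ‖G e / (e - w)‖ + ‖∫ t in e..1, G t / ((t : ℂ) - w) ^ 2‖) := by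
        gcongr
        exact (norm_add_le _ _).trans (add_le_add_left (norm_sub_le _ _) _)
    _ ≤ ε := by linarith

theorem mul_integral_div_ofReal_mul_sub {η : ℂ} (hη : η ≠ 0) (f : ℝ → ℂ) (ζ : ℂ) (a b : ℝ) :
    ζ * ∫ t in a..b, f t / ((t : ℂ) * η - ζ) = ζ / η * ∫ t in a..b, f t / (t - ζ / η) := by
  have hden : ∀ t : ℝ, (t : ℂ) * η - ζ = ((t : ℂ) - ζ / η) * η := fun t => by
    rw [sub_mul, div_mul_cancel₀ ζ hη]
  simp_rw [hden, ← div_div, intervalIntegral.integral_div]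
  ring

theorem norm_one_div_two_pi_mul_I_le_one : ‖1 / (2 * (Real.pi : ℂ) * Complex.I)‖ ≤ 1 := by
  rw [norm_div, norm_one, norm_mul, norm_mul, Complex.norm_I, Complex.norm_real,
    Real.norm_of_nonneg Real.pi_pos.le, Complex.norm_two, mul_one]
  exact div_le_one_of_le₀ (by linarith [Real.pi_gt_three]) (by positivity)

theorem stmt_12_general (η₁ : ℂ) (hη₁ : η₁ ≠ 0)
    (V : Set ℂ)
    (hseg : ∀ t : ℝ, 0 < t → t ≤ 1 → (t : ℂ) * η₁ ∈ V)
    (g : ℂ → ℂ) (hg : DifferentiableOn ℂ g V)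
    (G : ℝ → ℂ)
    (hG : ∀ t : ℝ, 0 < t → t ≤ 1 →
      Tendsto (fun ε : ℝ => ∫ s in ε..t, g ((s : ℂ) * η₁) * η₁) (𝓝[>] 0) (𝓝 (G t)))
    (hGlim : Tendsto G (𝓝[>] 0) (𝓝 0))
    (Φ : ℂ → ℂ)
    (hΦ : ∀ ζ : ℂ, (∀ t : ℝ, 0 ≤ t → t ≤ 1 → ζ ≠ (t : ℂ) * η₁) →
      Tendsto (fun ε : ℝ =>
          (1 / (2 * (Real.pi : ℂ) * Complex.I)) *
            ∫ t in ε..1, g ((t : ℂ) * η₁) * η₁ / ((t : ℂ) * η₁ - ζ))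
        (𝓝[>] 0) (𝓝 (Φ ζ))) :
    ∀ δ : ℝ, 0 < δ → δ < Real.pi → ∀ ε > (0:ℝ), ∃ ρ > (0:ℝ), ∀ ζ : ℂ,
      ζ ≠ 0 → ‖ζ‖ < ρ → δ ≤ |Complex.arg (ζ / η₁)| →
        ‖ζ * Φ ζ‖ ≤ ε := by
  intro δ hδ hδπ ε hε
  set f : ℝ → ℂ := fun t => g (t * η₁) * η₁
  have hf : ContinuousOn f (Ioc 0 1) :=
    (hg.continuousOn.comp (by fun_prop : Continuous fun t : ℝ => (t : ℂ) * η₁).continuousOn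
      fun t ht => hseg t ht.1 ht.2).mul continuousOn_const
  obtain ⟨ρ, hρ, hsmall⟩ := eventually_norm_mul_integral_div_sub_le hf
    (fun t ht => hG t ht.1 ht.2) hGlim hδ hδπ hε
  refine ⟨ρ * ‖η₁‖, by positivity, fun ζ hζ0 hζρ hζδ => ?_⟩
  have hoff : ∀ t : ℝ, 0 ≤ t → t ≤ 1 → ζ ≠ (t : ℂ) * η₁ := fun t ht _ h =>
    ofReal_ne_of_le_abs_arg hδ hζδ ht (by rw [h, mul_div_cancel_right₀ _ hη₁])
  have hwρ : ‖ζ / η₁‖ < ρ := by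
    rwa [norm_div, div_lt_iff₀ (norm_pos_iff.mpr hη₁)]
  refine le_of_tendsto ((hΦ ζ hoff).const_mul ζ).norm ?_
  filter_upwards [hsmall _ (div_ne_zero hζ0 hη₁) hwρ hζδ] with e he
  rw [mul_left_comm, mul_integral_div_ofReal_mul_sub hη₁, norm_mul]
  exact (mul_le_of_le_one_left (norm_nonneg _) norm_one_div_two_pi_mul_I_le_one).trans he

/-- Smallness of the adapted major (Proposition 6.3, Part II / Lemma 6.1):
ζ·Φ(ζ) → 0 as ζ → 0 uniformly in every angular sector not adherent to the
segment of integration. -/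
theorem stmt_12 (η₁ : ℂ) (hη₁ : η₁ ≠ 0)
    (V : Set ℂ) (hV : IsOpen V)
    (hseg : ∀ t : ℝ, 0 < t → t ≤ 1 → (t : ℂ) * η₁ ∈ V)
    (g : ℂ → ℂ) (hg : DifferentiableOn ℂ g V)
    (G : ℝ → ℂ) (hG0 : G 0 = 0)
    (hG : ∀ t : ℝ, 0 < t → t ≤ 1 →
      Tendsto (fun ε : ℝ => ∫ s in ε..t, g ((s : ℂ) * η₁) * η₁) (𝓝[>] 0) (𝓝 (G t)))
    (hGlim : Tendsto G (𝓝[>] 0) (𝓝 0))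
    (Φ : ℂ → ℂ)
    (hΦ : ∀ ζ : ℂ, (∀ t : ℝ, 0 ≤ t → t ≤ 1 → ζ ≠ (t : ℂ) * η₁) →
      Tendsto (fun ε : ℝ =>
          (1 / (2 * (Real.pi : ℂ) * Complex.I)) *
            ∫ t in ε..1, g ((t : ℂ) * η₁) * η₁ / ((t : ℂ) * η₁ - ζ))
        (𝓝[>] 0) (𝓝 (Φ ζ))) :
    ∀ δ : ℝ, 0 < δ → δ < Real.pi → ∀ ε > (0:ℝ), ∃ ρ > (0:ℝ), ∀ ζ : ℂ,
      ζ ≠ 0 → ‖ζ‖ < ρ → δ ≤ |Complex.arg (ζ / η₁)| →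
        ‖ζ * Φ ζ‖ ≤ ε :=
  stmt_12_general η₁ hη₁ V hseg g hg G hG hGlim Φ hΦ
end

section
/- Let a, b ∈ ℝ with b − a > 2π, let c ∈ ℝ, and let F be holomorphic on the half-strip S = {w ∈ ℂ : Re w < c, a < Im w < b}. Assume that for all a', b' with a < a' < b' < b, sup{ |F(w) e^{w}| : Re w = σ, a' ≤ Im w ≤ b' } → 0 as σ → −∞. Then for every w₀ ∈ S with a < Im w₀ and Im w₀ + 2π < b, the improper integral ∫_{−∞}^0 ( F(w₀ + t) − F(w₀ + t + 2πi) ) e^{w₀ + t} dt converges, i.e. lim_{T→−∞} ∫_T^0 ( F(w₀ + t) − F(w₀ + t + 2πi) ) e^{w₀ + t} dt exists in ℂ. -/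
open MeasureTheory Topology Filter Complex Set
open scoped Interval

/-!
With `g z = F (w₀ + z) * exp (w₀ + z)`, the `2πi`-periodicity of `exp` makes the integrand
`g t - g (t + 2πi)`. Cauchy's theorem on the rectangle `[T, 0] × [0, 2π]` turns its integral
into the difference of the integrals of `g` over the vertical edges `Re z = T` and `Re z = 0`,
and the decay hypothesis makes the edge integral at `Re z = T` tend to `0` as `T → -∞`.
-/

theorem integral_horizontal_sub_eq_smul_vertical_sub {E : Type*} [NormedAddCommGroup E]
    [NormedSpace ℂ E] [CompleteSpace E] {f : ℂ → E} {T h : ℝ}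
    (hf : DifferentiableOn ℂ f ([[T, 0]] ×ℂ [[0, h]])) :
    ∫ t in T..0, (f t - f (t + h * I)) =
      I • ((∫ y in 0..h, f (T + y * I)) - ∫ y in 0..h, f (y * I)) := by
  have hcauchy := integral_boundary_rect_eq_zero_of_differentiableOn f ⟨T, 0⟩ ⟨0, h⟩ hf
  have hedge (y : ℝ) (hy : y ∈ [[0, h]]) :
      IntervalIntegrable (fun t : ℝ => f (t + y * I)) volume T 0 :=
    (hf.continuousOn.comp (by fun_prop) fun t ht =>
      ⟨by simpa using ht, by simpa using hy⟩).intervalIntegrable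
  rw [intervalIntegral.integral_sub (by simpa using hedge 0 left_mem_uIcc)
    (hedge h right_mem_uIcc)]
  simp only [ofReal_zero, zero_mul, add_zero, zero_add] at hcauchy
  rw [smul_sub, ← sub_eq_zero, ← hcauchy]
  abel

theorem tendsto_integral_vertical_atBot_of_tendstoUniformlyOn {E : Type*} [NormedAddCommGroup E]
    [NormedSpace ℝ E] {g : ℂ → E} {h : ℝ} (hg : ContinuousOn g (Iic 0 ×ℂ [[0, h]]))
    (hlim : TendstoUniformlyOn (fun (T y : ℝ) => g (T + y * I)) 0 atBot [[0, h]]) :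
    Tendsto (fun T : ℝ => ∫ y in 0..h, g (T + y * I)) atBot (𝓝 0) := by
  have hcont : ∀ᶠ T : ℝ in atBot, ContinuousOn (fun y : ℝ => g (T + y * I)) [[0, h]] := by
    filter_upwards [eventually_le_atBot 0] with T hT
    exact hg.comp (by fun_prop) fun y hy => ⟨by simpa using hT, by simpa using hy⟩
  simpa using hlim.tendsto_intervalIntegral_of_continuousOn hcont

theorem stmt_14_general (a b c : ℝ)
    (S : Set ℂ) (hS : S = {w : ℂ | w.re < c ∧ a < w.im ∧ w.im < b})
    (F : ℂ → ℂ) (hF : DifferentiableOn ℂ F S)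
    (hdecay : ∀ a' b' : ℝ, a < a' → a' < b' → b' < b →
      ∀ ε > (0:ℝ), ∃ σ₀ : ℝ, ∀ σ ≤ σ₀, ∀ w : ℂ, w.re = σ → a' ≤ w.im → w.im ≤ b' →
        ‖F w * Complex.exp w‖ ≤ ε) :
    ∀ w₀ ∈ S, a < w₀.im → w₀.im + 2 * Real.pi < b →
      ∃ L : ℂ, Tendsto (fun T : ℝ =>
          ∫ t in T..0, (F (w₀ + (t : ℂ)) - F (w₀ + (t : ℂ) + 2 * (Real.pi : ℂ) * Complex.I)) *
            Complex.exp (w₀ + (t : ℂ)))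
        atBot (𝓝 L) := by
  intro w₀ hw₀ ha hb
  subst hS
  obtain ⟨hc, -, -⟩ := hw₀
  have huIcc := uIcc_of_le Real.two_pi_pos.le
  set g : ℂ → ℂ := fun z => F (w₀ + z) * exp (w₀ + z)
  have hg : DifferentiableOn ℂ g (Iic 0 ×ℂ [[0, 2 * Real.pi]]) := by
    refine DifferentiableOn.mul (hF.comp (by fun_prop) fun z ⟨hre, him⟩ => ?_) (by fun_prop)
    simp only [huIcc, mem_preimage, mem_Iic, mem_Icc] at hre him
    simp only [mem_ofPred_eq, add_re, add_im]
    exact ⟨by linarith, by linarith, by linarith⟩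
  have hlim : TendstoUniformlyOn (fun (T y : ℝ) => g (T + y * I)) 0 atBot [[0, 2 * Real.pi]] := by
    refine Metric.tendstoUniformlyOn_iff.mpr fun ε hε => ?_
    obtain ⟨σ₀, hσ₀⟩ := hdecay w₀.im (w₀.im + 2 * Real.pi) ha (by linarith [Real.pi_pos]) hb
      (ε / 2) (half_pos hε)
    filter_upwards [eventually_le_atBot (σ₀ - w₀.re)] with T hT y hy
    rw [huIcc] at hy
    have hbound := hσ₀ (w₀.re + T) (by linarith) (w₀ + (T + y * I)) (by simp) (by simp [hy.1])
      (by simp [hy.2])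
    simp only [Pi.zero_apply, dist_zero_left]
    linarith
  refine ⟨I • (0 - ∫ y in 0..2 * Real.pi, g (y * I)), ?_⟩
  refine (((tendsto_integral_vertical_atBot_of_tendstoUniformlyOn hg.continuousOn hlim).sub_const
    _).const_smul I).congr' ?_
  filter_upwards [eventually_le_atBot 0] with T hT
  rw [← integral_horizontal_sub_eq_smul_vertical_sub
    (hg.mono (reProdIm_subset_iff'.mpr (Or.inl ⟨uIcc_of_le hT ▸ Icc_subset_Iic_self, le_rfl⟩)))]
  refine intervalIntegral.integral_congr fun t _ => ?_
  simp only [g]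
  push_cast
  rw [← add_assoc, exp_add (w₀ + t), exp_two_pi_mul_I, mul_one, sub_mul]

/-- var maps small microfunctions to minors (Proposition 6.3, Part I, in the
logarithmic model w = log ζ): for F holomorphic in a half-strip with
F(w)e^w → 0 uniformly on substrips as Re w → −∞, the primitive of the
variation F(w) − F(w + 2πi) against e^w converges at −∞. -/
theorem stmt_14 (a b c : ℝ) (hab : 2 * Real.pi < b - a)
    (S : Set ℂ) (hS : S = {w : ℂ | w.re < c ∧ a < w.im ∧ w.im < b})
    (F : ℂ → ℂ) (hF : DifferentiableOn ℂ F S)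
    (hdecay : ∀ a' b' : ℝ, a < a' → a' < b' → b' < b →
      ∀ ε > (0:ℝ), ∃ σ₀ : ℝ, ∀ σ ≤ σ₀, ∀ w : ℂ, w.re = σ → a' ≤ w.im → w.im ≤ b' →
        ‖F w * Complex.exp w‖ ≤ ε) :
    ∀ w₀ ∈ S, a < w₀.im → w₀.im + 2 * Real.pi < b →
      ∃ L : ℂ, Tendsto (fun T : ℝ =>
          ∫ t in T..0, (F (w₀ + (t : ℂ)) - F (w₀ + (t : ℂ) + 2 * (Real.pi : ℂ) * Complex.I)) *
            Complex.exp (w₀ + (t : ℂ)))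
        atBot (𝓝 L) :=
  stmt_14_general a b c S hS F hF hdecay
end

section
/- Let r > 0, n ≥ 1, and let f₁, …, f_n : [0, r] → ℂ be continuous functions. Let F_i(t) = ∫_0^t f_i(s) ds, define the convolution of two continuous functions on [0, r] by (u * v)(t) = ∫_0^t u(τ) v(t − τ) dτ, let g = f₁ * f₂ * ⋯ * f_n, and let g^{(−n−1)} be obtained from g by integrating from 0 iteratively n + 1 times (g^{(−1)}(t) = ∫_0^t g(s) ds and g^{(−k−1)}(t) = ∫_0^t g^{(−k)}(s) ds). Then for every t ∈ [0, r]: g^{(−n−1)}(t) = ∫_{Δ_n(t)} F₁(s₁) F₂(s₂) ⋯ F_n(s_n) ds₁ ⋯ ds_n, where Δ_n(t) = {s ∈ ℝⁿ : s_i ≥ 0 for all i, s₁ + ⋯ + s_n ≤ t}; consequently |g^{(−n−1)}(t)| ≤ (max_i sup_{s ∈ [0,t]} |F_i(s)|)ⁿ · tⁿ / n!. -/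
/-!
Integrating a convolution from `0` integrates one of its factors: by Fubini on the triangle
`0 ≤ τ ≤ s ≤ t`, `∫₀ᵗ (u * v) = u * ∫₀ v`. Moving one integration onto the first factor and the
remaining ones onto the rest gives `(f₁ * h)^{(−n−1)} = F₁ * h^{(−n)}`, and slicing `Δ_n(t)` along
its first coordinate, `Δ_n(t) ≅ ⋃_{x ∈ [0,t]} {x} × Δ_{n−1}(t − x)`, turns the simplex integral into
the same convolution, so the formula follows by induction on `n`. The same slicing applied to the
constant `1` gives `vol Δ_n(t) = tⁿ / n!`, whence the bound. Only the values of the `f_i` on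
`[0, t]` enter, so they may first be replaced by continuous functions on `ℝ`.
-/

open MeasureTheory

/-- Convolution of two functions on `[0, r]`: `(u * v)(t) = ∫_0^t u(τ) v(t−τ) dτ`. -/
noncomputable def convOn (u v : ℝ → ℂ) : ℝ → ℂ :=
  fun t => ∫ τ in (0:ℝ)..t, u τ * v (t - τ)

/-- Iterated convolution `f₁ * f₂ * ⋯ * f_n` of a list of functions
(the value on the empty list is junk and unused for `n ≥ 1`). -/
noncomputable def iterConv : List (ℝ → ℂ) → (ℝ → ℂ)
  | [] => fun _ => 1
  | [u] => u
  | u :: v :: rest => convOn u (iterConv (v :: rest))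

/-- `k`-fold iterated integration from `0`:
`iterInt 0 u = u`, `iterInt (k+1) u t = ∫_0^t (iterInt k u)(s) ds`. -/
noncomputable def iterInt : ℕ → (ℝ → ℂ) → (ℝ → ℂ)
  | 0, u => u
  | k + 1, u => fun t => ∫ s in (0:ℝ)..t, iterInt k u s

open Set

section Fubini

variable {α β E : Type*} [MeasurableSpace α] [MeasurableSpace β] {μ : Measure α} {ν : Measure β}
  [SFinite μ] [SFinite ν] [NormedAddCommGroup E] [NormedSpace ℝ E]

theorem setIntegral_prod_fiber {f : α × β → E} {s : Set α} {T : α → Set β}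
    (hs : MeasurableSet s) (hsT : MeasurableSet {z : α × β | z.1 ∈ s ∧ z.2 ∈ T z.1})
    (hf : IntegrableOn f {z | z.1 ∈ s ∧ z.2 ∈ T z.1} (μ.prod ν)) :
    ∫ z in {z | z.1 ∈ s ∧ z.2 ∈ T z.1}, f z ∂μ.prod ν = ∫ x in s, ∫ y in T x, f (x, y) ∂ν ∂μ := by
  rw [← integral_indicator hsT, integral_prod _ (hf.integrable_indicator hsT),
    ← integral_indicator hs]
  congr 1 with x
  by_cases hx : x ∈ s
  · have hT : MeasurableSet (T x) := by
      simpa [hx] using measurable_prodMk_left hsT (x := x)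
    rw [indicator_of_mem hx, ← integral_indicator hT]
    congr 1 with y
    by_cases hy : y ∈ T x <;> simp [hx, hy]
  · simp [hx]

end Fubini

def simplex (n : ℕ) (t : ℝ) : Set (Fin n → ℝ) := {s | (∀ i, 0 ≤ s i) ∧ ∑ i, s i ≤ t}

lemma mem_Icc_of_mem_simplex {n : ℕ} {t : ℝ} {s : Fin n → ℝ} (hs : s ∈ simplex n t) (i : Fin n) :
    s i ∈ Icc 0 t :=
  ⟨hs.1 i, (Finset.single_le_sum (fun j _ => hs.1 j) (Finset.mem_univ i)).trans hs.2⟩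

lemma isClosed_simplex (n : ℕ) (t : ℝ) : IsClosed (simplex n t) :=
  (isClosed_le continuous_const continuous_id).inter
    (isClosed_le (continuous_finsetSum _ fun i _ => continuous_apply i) continuous_const)

lemma isCompact_simplex (n : ℕ) (t : ℝ) : IsCompact (simplex n t) :=
  (isCompact_Icc (a := 0) (b := fun _ => t)).of_isClosed_subset (isClosed_simplex n t)
    fun _ hs => ⟨fun i => (mem_Icc_of_mem_simplex hs i).1, fun i => (mem_Icc_of_mem_simplex hs i).2⟩

lemma simplex_zero {t : ℝ} (ht : 0 ≤ t) : simplex 0 t = univ := by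
  ext s; simp [simplex, ht]

lemma cons_mem_simplex_succ {m : ℕ} {t x : ℝ} {y : Fin m → ℝ} :
    (Fin.cons x y : Fin (m + 1) → ℝ) ∈ simplex (m + 1) t ↔ x ∈ Icc 0 t ∧ y ∈ simplex m (t - x) := by
  simp only [simplex, mem_ofPred_eq, Fin.forall_fin_succ, Fin.cons_zero, Fin.cons_succ,
    Fin.sum_univ_succ, mem_Icc]
  constructor
  · rintro ⟨⟨hx, hy⟩, hsum⟩
    exact ⟨⟨hx, by linarith [Finset.sum_nonneg fun i (_ : i ∈ Finset.univ) => hy i]⟩, hy,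
      by linarith⟩
  · rintro ⟨⟨hx, -⟩, hy, hsum⟩
    exact ⟨⟨hx, hy⟩, by linarith⟩

section Simplex

variable {𝕜 : Type*} [RCLike 𝕜]

theorem setIntegral_simplex_succ {m : ℕ} {t : ℝ} (ht : 0 ≤ t) {φ : Fin (m + 1) → ℝ → 𝕜}
    (hφ : ∀ i, Continuous (φ i)) :
    ∫ s in simplex (m + 1) t, ∏ i, φ i (s i) =
      ∫ x in (0)..t, φ 0 x * ∫ y in simplex m (t - x), ∏ i, φ i.succ (y i) := by
  set e := (MeasurableEquiv.piFinSuccAbove (fun _ : Fin (m + 1) => ℝ) 0).symm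
  have he : MeasurePreserving e := (volume_preserving_piFinSuccAbove (fun _ => ℝ) 0).symm
  have he_apply : ∀ z, e z = Fin.cons z.1 z.2 := fun z => by
    simp [e, MeasurableEquiv.piFinSuccAbove, Fin.insertNthEquiv]
  have hpre : e ⁻¹' simplex (m + 1) t = {z | z.1 ∈ Icc 0 t ∧ z.2 ∈ simplex m (t - z.1)} := by
    ext z; simp [he_apply, cons_mem_simplex_succ]
  have hint : IntegrableOn (fun s : Fin (m + 1) → ℝ => ∏ i, φ i (s i)) (simplex (m + 1) t) :=
    (continuous_finsetProd _ fun i _ => (hφ i).comp (continuous_apply i)).continuousOn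
      |>.integrableOn_compact (isCompact_simplex _ t)
  rw [← he.setIntegral_preimage_emb e.measurableEmbedding]
  rw [← he.integrableOn_comp_preimage e.measurableEmbedding] at hint
  have hmeas : MeasurableSet (e ⁻¹' simplex (m + 1) t) :=
    e.measurable (isClosed_simplex _ t).measurableSet
  rw [hpre] at hint hmeas ⊢
  rw [Measure.volume_eq_prod] at hint ⊢
  refine (setIntegral_prod_fiber (T := fun x => simplex m (t - x)) measurableSet_Icc hmeas
    hint).trans ?_
  rw [intervalIntegral.integral_of_le ht, ← integral_Icc_eq_integral_Ioc]
  congr 1 with x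
  simp only [Function.comp_apply, he_apply, Fin.prod_univ_succ, Fin.cons_zero, Fin.cons_succ]
  exact integral_const_mul _ _

theorem measureReal_simplex (n : ℕ) {t : ℝ} (ht : 0 ≤ t) :
    volume.real (simplex n t) = t ^ n / n.factorial := by
  induction n generalizing t with
  | zero => simp [simplex_zero ht, measureReal_def, volume_pi]
  | succ n ih =>
    have hslice := setIntegral_simplex_succ (m := n) ht (φ := fun _ _ => (1 : ℝ))
      fun _ => continuous_const
    simp only [Finset.prod_const_one, setIntegral_const, smul_eq_mul, mul_one, one_mul] at hslice
    rw [hslice, intervalIntegral.integral_congr (g := fun x => (t - x) ^ n / n.factorial)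
      fun x hx => ih (sub_nonneg.2 (uIcc_of_le ht ▸ hx).2)]
    have hpow : ∫ x in (0)..t, (t - x) ^ n = t ^ (n + 1) / (n + 1) := by
      simp [intervalIntegral.integral_comp_sub_left (fun x => x ^ n) t, integral_pow]
    rw [intervalIntegral.integral_div, hpow, Nat.factorial_succ]
    push_cast
    field_simp

theorem norm_setIntegral_simplex_prod_le {n : ℕ} {t : ℝ} (ht : 0 ≤ t) {φ : Fin n → ℝ → 𝕜}
    {B : ℝ} (hB : ∀ i, ∀ s ∈ Icc 0 t, ‖φ i s‖ ≤ B) :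
    ‖∫ s in simplex n t, ∏ i, φ i (s i)‖ ≤ B ^ n * t ^ n / n.factorial := by
  have hbound : ∀ s ∈ simplex n t, ‖∏ i, φ i (s i)‖ ≤ B ^ n := fun s hs => by
    rw [norm_prod]
    calc ∏ i, ‖φ i (s i)‖ ≤ ∏ _i : Fin n, B :=
          Finset.prod_le_prod (fun i _ => norm_nonneg _)
            fun i _ => hB i (s i) (mem_Icc_of_mem_simplex hs i)
      _ = B ^ n := by simp
  calc ‖∫ s in simplex n t, ∏ i, φ i (s i)‖ ≤ B ^ n * volume.real (simplex n t) :=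
        norm_setIntegral_le_of_norm_le_const (isCompact_simplex n t).measure_lt_top hbound
    _ = B ^ n * t ^ n / n.factorial := by rw [measureReal_simplex n ht, mul_div_assoc]

end Simplex

section Triangle

variable {E : Type*} [NormedAddCommGroup E] [NormedSpace ℝ E]

theorem integral_integral_triangle_swap {W : ℝ → ℝ → E} (hW : Continuous (Function.uncurry W))
    {t : ℝ} (ht : 0 ≤ t) :
    ∫ s in (0)..t, ∫ τ in (0)..s, W s τ = ∫ τ in (0)..t, ∫ s in τ..t, W s τ := by
  set S : Set (ℝ × ℝ) := {z | z.1 ∈ Icc 0 t ∧ z.2 ∈ Icc 0 z.1}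
  set S' : Set (ℝ × ℝ) := {z | z.1 ∈ Icc 0 t ∧ z.2 ∈ Icc z.1 t}
  have hS : MeasurableSet S := by simp only [S, mem_Icc]; measurability
  have hS' : MeasurableSet S' := by simp only [S', mem_Icc]; measurability
  have hSS' : Prod.swap ⁻¹' S = S' := by
    ext ⟨a, b⟩
    simp only [S, S', mem_preimage, Prod.fst_swap, Prod.snd_swap, mem_ofPred_eq, mem_Icc]
    constructor <;> rintro ⟨⟨h1, h2⟩, h3, h4⟩ <;> refine ⟨⟨?_, ?_⟩, ?_, ?_⟩ <;> linarith
  have hsquare : ∀ z ∈ S ∪ S', z ∈ Icc 0 t ×ˢ Icc 0 t := by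
    rintro z (⟨⟨h1, h2⟩, h3, h4⟩ | ⟨⟨h1, h2⟩, h3, h4⟩) <;>
      exact ⟨⟨by linarith, by linarith⟩, by linarith, by linarith⟩
  have hint : IntegrableOn (Function.uncurry W) S (volume.prod volume) :=
    (hW.continuousOn.integrableOn_compact (isCompact_Icc.prod isCompact_Icc)).mono_set
      fun z hz => hsquare z (.inl hz)
  have hint' : IntegrableOn (fun z => W z.2 z.1) S' (volume.prod volume) :=
    ((hW.comp continuous_swap).continuousOn.integrableOn_compact
      (isCompact_Icc.prod isCompact_Icc)).mono_set fun z hz => hsquare z (.inr hz)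
  calc ∫ s in (0)..t, ∫ τ in (0)..s, W s τ
      = ∫ s in Icc 0 t, ∫ τ in Icc 0 s, W s τ := by
        rw [intervalIntegral.integral_of_le ht, ← integral_Icc_eq_integral_Ioc]
        refine setIntegral_congr_fun measurableSet_Icc fun s hs => ?_
        rw [intervalIntegral.integral_of_le hs.1, integral_Icc_eq_integral_Ioc]
    _ = ∫ z in S, Function.uncurry W z ∂(volume.prod volume) :=
        (setIntegral_prod_fiber (T := fun s => Icc 0 s) measurableSet_Icc hS hint).symm
    _ = ∫ z in S', W z.2 z.1 ∂(volume.prod volume) := by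
        rw [← hSS']
        exact (Measure.measurePreserving_swap.setIntegral_preimage_emb
          MeasurableEquiv.prodComm.measurableEmbedding _ S).symm
    _ = ∫ τ in Icc 0 t, ∫ s in Icc τ t, W s τ :=
        setIntegral_prod_fiber (T := fun τ => Icc τ t) measurableSet_Icc hS' hint'
    _ = ∫ τ in (0)..t, ∫ s in τ..t, W s τ := by
        rw [intervalIntegral.integral_of_le ht, ← integral_Icc_eq_integral_Ioc]
        refine setIntegral_congr_fun measurableSet_Icc fun τ hτ => ?_
        rw [intervalIntegral.integral_of_le hτ.2, integral_Icc_eq_integral_Ioc]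

end Triangle

lemma continuous_iterInt {u : ℝ → ℂ} (hu : Continuous u) (k : ℕ) : Continuous (iterInt k u) := by
  induction k with
  | zero => exact hu
  | succ k ih =>
    exact intervalIntegral.continuous_primitive (fun a b => ih.intervalIntegrable a b) 0

lemma iterInt_congr {u v : ℝ → ℂ} {c : ℝ} (h : EqOn u v (Icc 0 c)) (k : ℕ) :
    EqOn (iterInt k u) (iterInt k v) (Icc 0 c) := by
  induction k with
  | zero => exact h
  | succ k ih =>
    intro t ht
    refine intervalIntegral.integral_congr fun s hs => ih ?_
    rw [uIcc_of_le ht.1] at hs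
    exact ⟨hs.1, hs.2.trans ht.2⟩

lemma convOn_comm (u v : ℝ → ℂ) : convOn u v = convOn v u := by
  ext t
  simpa [convOn, mul_comm] using
    (intervalIntegral.integral_comp_sub_left (a := 0) (b := t) (fun τ => u τ * v (t - τ)) t).symm

lemma continuous_convOn {u v : ℝ → ℂ} (hu : Continuous u) (hv : Continuous v) :
    Continuous (convOn u v) :=
  intervalIntegral.continuous_parametric_intervalIntegral_of_continuous
    ((hu.comp continuous_snd).mul (hv.comp (continuous_fst.sub continuous_snd))) continuous_id

lemma convOn_congr {u u' v v' : ℝ → ℂ} {c : ℝ} (hu : EqOn u u' (Icc 0 c))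
    (hv : EqOn v v' (Icc 0 c)) : EqOn (convOn u v) (convOn u' v') (Icc 0 c) := by
  intro t ht
  refine intervalIntegral.integral_congr fun τ hτ => ?_
  rw [uIcc_of_le ht.1] at hτ
  simp only [hu ⟨hτ.1, hτ.2.trans ht.2⟩, hv ⟨sub_nonneg.2 hτ.2, by linarith [hτ.1, ht.2]⟩]

theorem iterInt_one_convOn {u v : ℝ → ℂ} (hu : Continuous u) (hv : Continuous v) {t : ℝ}
    (ht : 0 ≤ t) : iterInt 1 (convOn u v) t = convOn u (iterInt 1 v) t := by
  calc iterInt 1 (convOn u v) t = ∫ s in (0)..t, ∫ τ in (0)..s, u τ * v (s - τ) := rfl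
    _ = ∫ τ in (0)..t, ∫ s in τ..t, u τ * v (s - τ) :=
      integral_integral_triangle_swap (W := fun s τ => u τ * v (s - τ))
        ((hu.comp continuous_snd).mul (hv.comp (continuous_fst.sub continuous_snd))) ht
    _ = convOn u (iterInt 1 v) t := by
      refine intervalIntegral.integral_congr fun τ _ => ?_
      rw [intervalIntegral.integral_const_mul,
        intervalIntegral.integral_comp_sub_right (fun s => v s), sub_self]
      rfl

theorem iterInt_convOn {u v : ℝ → ℂ} (hu : Continuous u) (hv : Continuous v) (k : ℕ) {t : ℝ}
    (ht : 0 ≤ t) : iterInt k (convOn u v) t = convOn u (iterInt k v) t := by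
  induction k generalizing t with
  | zero => rfl
  | succ k ih =>
    calc iterInt (k + 1) (convOn u v) t = ∫ s in (0)..t, convOn u (iterInt k v) s :=
          intervalIntegral.integral_congr fun s hs => ih (uIcc_of_le ht ▸ hs).1
      _ = convOn u (iterInt (k + 1) v) t := iterInt_one_convOn hu (continuous_iterInt hv k) ht

theorem iterInt_succ_convOn {u v : ℝ → ℂ} (hu : Continuous u) (hv : Continuous v) (k : ℕ)
    {t : ℝ} (ht : 0 ≤ t) :
    iterInt (k + 1) (convOn u v) t = convOn (iterInt 1 u) (iterInt k v) t := by
  calc iterInt (k + 1) (convOn u v) t = ∫ s in (0)..t, convOn u (iterInt k v) s :=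
        intervalIntegral.integral_congr fun s hs => iterInt_convOn hu hv k (uIcc_of_le ht ▸ hs).1
    _ = iterInt 1 (convOn (iterInt k v) u) t := by rw [convOn_comm]; rfl
    _ = convOn (iterInt 1 u) (iterInt k v) t := by
      rw [iterInt_one_convOn (continuous_iterInt hv k) hu ht, convOn_comm]

lemma iterConv_ofFn_succ_succ {n : ℕ} (f : Fin (n + 2) → ℝ → ℂ) :
    iterConv (List.ofFn f) = convOn (f 0) (iterConv (List.ofFn fun i => f i.succ)) := by
  rw [List.ofFn_succ, List.ofFn_succ]
  rfl

lemma continuous_iterConv : ∀ {l : List (ℝ → ℂ)}, (∀ u ∈ l, Continuous u) →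
    Continuous (iterConv l)
  | [], _ => continuous_const
  | [u], h => h u (by simp)
  | u :: v :: rest, h =>
    continuous_convOn (h u (by simp)) (continuous_iterConv fun w hw => h w (.tail u hw))

lemma iterConv_congr {c : ℝ} : ∀ {l l' : List (ℝ → ℂ)},
    List.Forall₂ (fun u v => EqOn u v (Icc 0 c)) l l' → EqOn (iterConv l) (iterConv l') (Icc 0 c)
  | [], [], _ => fun _ _ => rfl
  | [_], [_], .cons h .nil => h
  | _ :: _ :: _, _ :: _ :: _, .cons h hrest => convOn_congr h (iterConv_congr hrest)

theorem iterInt_iterConv_ofFn (n : ℕ) {f : Fin (n + 1) → ℝ → ℂ} (hf : ∀ i, Continuous (f i))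
    {t : ℝ} (ht : 0 ≤ t) :
    iterInt (n + 2) (iterConv (List.ofFn f)) t =
      ∫ s in simplex (n + 1) t, ∏ i, iterInt 1 (f i) (s i) := by
  induction n generalizing t with
  | zero =>
    rw [setIntegral_simplex_succ ht fun i => continuous_iterInt (hf i) 1]
    refine intervalIntegral.integral_congr fun x hx => ?_
    simp [measureReal_simplex 0 (sub_nonneg.2 (uIcc_of_le ht ▸ hx).2)]
    rfl
  | succ n ih =>
    rw [iterConv_ofFn_succ_succ, iterInt_succ_convOn (hf 0)
      (continuous_iterConv (List.forall_mem_ofFn_iff.2 fun i => hf i.succ)) _ ht,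
      setIntegral_simplex_succ ht fun i => continuous_iterInt (hf i) 1]
    refine intervalIntegral.integral_congr fun x hx => ?_
    exact congrArg _ (ih (fun i => hf i.succ) (sub_nonneg.2 (uIcc_of_le ht ▸ hx).2))

theorem stmt_16_general (r : ℝ) (n : ℕ) (hn : 1 ≤ n)
    (f : Fin n → ℝ → ℂ) (hf : ∀ i, ContinuousOn (f i) (Set.Icc 0 r))
    (F : Fin n → ℝ → ℂ) (hF : ∀ i, ∀ t : ℝ, F i t = ∫ s in (0:ℝ)..t, f i s)
    (g : ℝ → ℂ) (hg : g = iterConv (List.ofFn f)) :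
    ∀ t ∈ Set.Icc (0:ℝ) r,
      (iterInt (n + 1) g t =
        ∫ s in {s : Fin n → ℝ | (∀ i, 0 ≤ s i) ∧ ∑ i, s i ≤ t}, ∏ i, F i (s i)) ∧
      ∀ B : ℝ, (∀ i, ∀ s ∈ Set.Icc (0:ℝ) t, ‖F i s‖ ≤ B) →
        ‖iterInt (n + 1) g t‖ ≤ B ^ n * t ^ n / n.factorial := by
  obtain ⟨m, rfl⟩ := Nat.exists_eq_add_of_le' hn
  intro t ht
  set f' : Fin (m + 1) → ℝ → ℂ := fun i => IccExtend ht.1 ((Icc 0 t).domRestrict (f i))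
  have hf'_cont (i) : Continuous (f' i) :=
    ((hf i).mono (Icc_subset_Icc_right ht.2)).domRestrict.Icc_extend'
  have hf' (i) : EqOn (f i) (f' i) (Icc 0 t) := fun x hx =>
    (IccExtend_of_mem ht.1 ((Icc 0 t).domRestrict (f i)) hx).symm
  have hF' (i) : EqOn (F i) (iterInt 1 (f' i)) (Icc 0 t) := fun x hx =>
    (hF i x).trans (iterInt_congr (hf' i) 1 hx)
  have hg' : iterInt (m + 2) g t = iterInt (m + 2) (iterConv (List.ofFn f')) t :=
    hg ▸ iterInt_congr (iterConv_congr (List.forall₂_iff_get.2 ⟨by simp, fun k _ _ => by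
      simp only [List.get_eq_getElem, List.getElem_ofFn]; exact hf' _⟩)) _ ⟨ht.1, le_rfl⟩
  have hformula : iterInt (m + 2) g t = ∫ s in simplex (m + 1) t, ∏ i, F i (s i) := by
    rw [hg', iterInt_iterConv_ofFn m hf'_cont ht.1]
    exact setIntegral_congr_fun (isClosed_simplex _ t).measurableSet fun s hs =>
      Finset.prod_congr rfl fun i _ => (hF' i (mem_Icc_of_mem_simplex hs i)).symm
  exact ⟨hformula, fun B hB => hformula ▸ norm_setIntegral_simplex_prod_le ht.1 hB⟩

/-- Simplex formula and `1/n!` bound for iterated convolutions of minors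
(one-dimensional core of Lemma 7.2, generalizing CNP's Key Lemma 2):
`g^{(−n−1)}(t) = ∫_{Δ_n(t)} F₁(s₁) ⋯ F_n(s_n) ds`, hence
`|g^{(−n−1)}(t)| ≤ Bⁿ tⁿ / n!` for any common bound `B` of the primitives. -/
theorem stmt_16 (r : ℝ) (hr : 0 < r) (n : ℕ) (hn : 1 ≤ n)
    (f : Fin n → ℝ → ℂ) (hf : ∀ i, ContinuousOn (f i) (Set.Icc 0 r))
    (F : Fin n → ℝ → ℂ) (hF : ∀ i, ∀ t : ℝ, F i t = ∫ s in (0:ℝ)..t, f i s)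
    (g : ℝ → ℂ) (hg : g = iterConv (List.ofFn f)) :
    ∀ t ∈ Set.Icc (0:ℝ) r,
      (iterInt (n + 1) g t =
        ∫ s in {s : Fin n → ℝ | (∀ i, 0 ≤ s i) ∧ ∑ i, s i ≤ t}, ∏ i, F i (s i)) ∧
      ∀ B : ℝ, (∀ i, ∀ s ∈ Set.Icc (0:ℝ) t, ‖F i s‖ ≤ B) →
        ‖iterInt (n + 1) g t‖ ≤ B ^ n * t ^ n / n.factorial :=
  stmt_16_general r n hn f hf F hF g hg
end
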